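/- arXiv:1805.07532 — 7 statements merged into one kernel-verified Lean document; each statement's English description precedes it below -/
import Mathlib

section
/- For every x > 0 and every t ≥ 0, the expectation of the capital-per-capita process satisfies E[X^x_t] ≤ 2^{η−1} (x + t^η). -/
/-!
Write `Y_t = ∫₀ᵗ (μ + c_s + σ²/2) ds + σ W_t`, so that `G_t ^ η = exp Y_t`. For `a ≤ b` the
drift of `Y` over `(a, b]` is at least `σ²/2 · (b - a)`, hence `(G_a / G_b) ^ η` is dominated
by the exponential martingale `exp (-σ (W_b - W_a) - σ²/2 · (b - a))`, whose mean is `1`.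

Pointwise, `(u + v) ^ η ≤ 2 ^ (η - 1) (u ^ η + v ^ η)` splits `X_t` into `x G_t ^ (-η)` and
`((1 - α) ∫₀ᵗ G_s ds) ^ η G_t ^ (-η) ≤ t ^ (η - 1) ∫₀ᵗ (G_s / G_t) ^ η ds` (Jensen). After
Tonelli, the ratio bound with `a = 0` (where `G_0 = 1`) and with `a = s` bounds the expectations
of the two terms by `x` and `t ^ η`.
-/

open MeasureTheory Real Set Filter ProbabilityTheory
open scoped NNReal ENNReal

lemma lintegral_exp_mul_of_map_eq_gaussianReal {Ω : Type*} [MeasurableSpace Ω]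
    {P : Measure Ω} {Z : Ω → ℝ} {m : ℝ} {v : ℝ≥0} (hZ : P.map Z = gaussianReal m v) (θ : ℝ) :
    ∫⁻ ω, ENNReal.ofReal (exp (θ * Z ω)) ∂P = ENNReal.ofReal (exp (m * θ + v * θ ^ 2 / 2)) := by
  have hZm : AEMeasurable Z P := aemeasurable_of_map_neZero (by rw [hZ]; infer_instance)
  rw [← lintegral_map' (f := fun x => ENNReal.ofReal (exp (θ * x))) (by fun_prop) hZm, hZ,
    ← ofReal_integral_eq_lintegral_ofReal (integrable_exp_mul_gaussianReal θ)
      (ae_of_all _ fun _ => (exp_pos _).le),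
    ← congrFun mgf_fun_id_gaussianReal θ]
  rfl

lemma rpow_lintegral_le_measure_univ_rpow_mul {α : Type*} [MeasurableSpace α] {μ : Measure α}
    {f : α → ℝ≥0∞} (hf : AEMeasurable f μ) {p : ℝ} (hp : 1 ≤ p) :
    (∫⁻ a, f a ∂μ) ^ p ≤ μ univ ^ (p - 1) * ∫⁻ a, f a ^ p ∂μ := by
  have h := eLpNorm'_le_eLpNorm'_mul_rpow_measure_univ one_pos hp hf.aestronglyMeasurable
  simp only [eLpNorm'_eq_lintegral_enorm, enorm_eq_self, ENNReal.rpow_one, div_one] at h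
  have hp0 : 0 < p := one_pos.trans_le hp
  calc (∫⁻ a, f a ∂μ) ^ p
      ≤ ((∫⁻ a, f a ^ p ∂μ) ^ (1 / p) * μ univ ^ (1 - 1 / p)) ^ p :=
        ENNReal.rpow_le_rpow h hp0.le
    _ = μ univ ^ (p - 1) * ∫⁻ a, f a ^ p ∂μ := by
        rw [ENNReal.mul_rpow_of_nonneg _ _ hp0.le, ← ENNReal.rpow_mul, ← ENNReal.rpow_mul,
          one_div_mul_cancel hp0.ne', ENNReal.rpow_one, mul_comm, sub_mul, one_mul,
          one_div_mul_cancel hp0.ne']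

lemma ofReal_integral_le_lintegral_ofReal {α : Type*} [MeasurableSpace α] {μ : Measure α}
    {f : α → ℝ} (hf : ∀ a, 0 ≤ f a) :
    ENNReal.ofReal (∫ a, f a ∂μ) ≤ ∫⁻ a, ENNReal.ofReal (f a) ∂μ :=
  calc ENNReal.ofReal (∫ a, f a ∂μ) = ‖∫ a, f a ∂μ‖ₑ :=
        (Real.enorm_of_nonneg (integral_nonneg hf)).symm
    _ ≤ ∫⁻ a, ‖f a‖ₑ ∂μ := enorm_integral_le_lintegral_enorm f
    _ = ∫⁻ a, ENNReal.ofReal (f a) ∂μ := lintegral_congr fun a => Real.enorm_of_nonneg (hf a)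

lemma Measurable.setIntegral_Ioc_uncurry {β : Type*} [MeasurableSpace β] {f : ℝ → β → ℝ}
    (hf : Measurable (Function.uncurry f)) (a : ℝ) :
    Measurable fun p : ℝ × β => ∫ s in Ioc a p.1, f s p.2 := by
  let S : Set ((ℝ × β) × ℝ) := {q | q.2 ∈ Ioc a q.1.1}
  have hS : MeasurableSet S :=
    (measurableSet_lt measurable_const measurable_snd).inter
      (measurableSet_le measurable_snd (measurable_fst.comp measurable_fst))
  have hF : Measurable (S.indicator fun q => f q.2 q.1.2) :=
    (hf.comp (measurable_snd.prodMk (measurable_snd.comp measurable_fst))).indicator hS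
  convert (hF.stronglyMeasurable.integral_prod_right' (ν := volume)).measurable using 2 with p
  rw [← integral_indicator measurableSet_Ioc]
  rfl

lemma mul_sub_le_setIntegral_Ioc_sub {g : ℝ → ℝ} {l a b m : ℝ} (hla : l ≤ a) (hab : a ≤ b)
    (hg : IntegrableOn g (Ioc l b)) (hm : ∀ s, m ≤ g s) :
    m * (b - a) ≤ (∫ s in Ioc l b, g s) - ∫ s in Ioc l a, g s := by
  have hlb := (intervalIntegrable_iff_integrableOn_Ioc_of_le (hla.trans hab)).2 hg
  have hla' := (intervalIntegrable_iff_integrableOn_Ioc_of_le hla).2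
    (hg.mono_set (Ioc_subset_Ioc_right hab))
  have hab' := (intervalIntegrable_iff_integrableOn_Ioc_of_le hab).2
    (hg.mono_set (Ioc_subset_Ioc_left hla))
  rw [← intervalIntegral.integral_of_le (hla.trans hab), ← intervalIntegral.integral_of_le hla,
    intervalIntegral.integral_interval_sub_left hlb hla']
  calc m * (b - a) = ∫ _ in a..b, m := by simp [mul_comm]
    _ ≤ ∫ s in a..b, g s :=
        intervalIntegral.integral_mono_on hab intervalIntegrable_const hab' fun s _ => hm s

lemma ofReal_rpow_neg_mul_add_rpow_le {g x y η : ℝ} (hη : 1 ≤ η) (hg : 0 ≤ g) (hx : 0 ≤ x)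
    (hy : 0 ≤ y) :
    ENNReal.ofReal (g ^ (-η) * (x ^ η⁻¹ + η⁻¹ * y) ^ η) ≤ 2 ^ (η - 1) *
      (ENNReal.ofReal x * ENNReal.ofReal (g ^ (-η))
        + ENNReal.ofReal y ^ η * ENNReal.ofReal (g ^ (-η))) := by
  have hη0 : 0 < η := one_pos.trans_le hη
  have hx' : ENNReal.ofReal (x ^ η⁻¹) ^ η = ENNReal.ofReal x := by
    rw [ENNReal.ofReal_rpow_of_nonneg (rpow_nonneg hx _) hη0.le, ← rpow_mul hx,
      inv_mul_cancel₀ hη0.ne', rpow_one]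
  have hy' : ENNReal.ofReal (η⁻¹ * y) ^ η ≤ ENNReal.ofReal y ^ η :=
    ENNReal.rpow_le_rpow (ENNReal.ofReal_le_ofReal
      (mul_le_of_le_one_left hy (inv_le_one_of_one_le₀ hη))) hη0.le
  calc ENNReal.ofReal (g ^ (-η) * (x ^ η⁻¹ + η⁻¹ * y) ^ η)
      = ENNReal.ofReal (g ^ (-η))
          * (ENNReal.ofReal (x ^ η⁻¹) + ENNReal.ofReal (η⁻¹ * y)) ^ η := by
        rw [ENNReal.ofReal_mul (rpow_nonneg hg _),
          ← ENNReal.ofReal_add (rpow_nonneg hx _) (by positivity),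
          ENNReal.ofReal_rpow_of_nonneg (by positivity) hη0.le]
    _ ≤ ENNReal.ofReal (g ^ (-η)) * (2 ^ (η - 1) *
          (ENNReal.ofReal (x ^ η⁻¹) ^ η + ENNReal.ofReal (η⁻¹ * y) ^ η)) := by
        gcongr
        exact ENNReal.rpow_add_le_mul_rpow_add_rpow _ _ hη
    _ ≤ ENNReal.ofReal (g ^ (-η)) * (2 ^ (η - 1) * (ENNReal.ofReal x + ENNReal.ofReal y ^ η)) := by
        rw [hx']
        gcongr
    _ = _ := by ring

section MomentBound

variable {Ω : Type*} [MeasurableSpace Ω] {P : Measure Ω} {G : ℝ → Ω → ℝ} {η t : ℝ}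

lemma lintegral_rpow_integral_mul_rpow_neg_le [SFinite P] (hG : Measurable (Function.uncurry G))
    (hGnn : ∀ t ω, 0 ≤ G t ω) (hη : 1 ≤ η)
    (hratio : ∀ a b, 0 ≤ a → a ≤ b → ∫⁻ ω, ENNReal.ofReal (G a ω ^ η * G b ω ^ (-η)) ∂P ≤ 1) :
    ∫⁻ ω, ENNReal.ofReal (∫ s in Ioc 0 t, G s ω) ^ η * ENNReal.ofReal (G t ω ^ (-η)) ∂P
      ≤ ENNReal.ofReal t ^ η := by
  have hη0 : 0 < η := one_pos.trans_le hη
  have hjensen : ∀ ω, ENNReal.ofReal (∫ s in Ioc 0 t, G s ω) ^ η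
      ≤ ENNReal.ofReal t ^ (η - 1) * ∫⁻ s in Ioc 0 t, ENNReal.ofReal (G s ω ^ η) := by
    intro ω
    calc ENNReal.ofReal (∫ s in Ioc 0 t, G s ω) ^ η
        ≤ (∫⁻ s in Ioc 0 t, ENNReal.ofReal (G s ω)) ^ η :=
          ENNReal.rpow_le_rpow (ofReal_integral_le_lintegral_ofReal (hGnn · ω)) hη0.le
      _ ≤ volume.restrict (Ioc 0 t) univ ^ (η - 1) *
            ∫⁻ s in Ioc 0 t, ENNReal.ofReal (G s ω) ^ η :=
          rpow_lintegral_le_measure_univ_rpow_mul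
            (hG.comp (measurable_id.prodMk measurable_const)).ennreal_ofReal.aemeasurable hη
      _ = _ := by
          simp only [Measure.restrict_apply_univ, Real.volume_Ioc, sub_zero,
            ENNReal.ofReal_rpow_of_nonneg (hGnn _ ω) hη0.le]
  have hmeas : Measurable fun p : Ω × ℝ => ENNReal.ofReal (G p.2 p.1 ^ η * G t p.1 ^ (-η)) :=
    (((hG.comp measurable_swap).pow_const η).mul
      ((hG.comp (measurable_const.prodMk measurable_fst)).pow_const _)).ennreal_ofReal
  calc ∫⁻ ω, ENNReal.ofReal (∫ s in Ioc 0 t, G s ω) ^ η * ENNReal.ofReal (G t ω ^ (-η)) ∂P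
      ≤ ∫⁻ ω, ENNReal.ofReal t ^ (η - 1) *
          (∫⁻ s in Ioc 0 t, ENNReal.ofReal (G s ω ^ η * G t ω ^ (-η))) ∂P := by
        refine lintegral_mono fun ω => ?_
        calc _ ≤ (ENNReal.ofReal t ^ (η - 1) * ∫⁻ s in Ioc 0 t, ENNReal.ofReal (G s ω ^ η))
              * ENNReal.ofReal (G t ω ^ (-η)) := by gcongr; exact hjensen ω
          _ = _ := by
              rw [mul_assoc, ← lintegral_mul_const' _ _ ENNReal.ofReal_ne_top]
              simp_rw [ENNReal.ofReal_mul (rpow_nonneg (hGnn _ ω) _)]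
    _ = ENNReal.ofReal t ^ (η - 1) *
          ∫⁻ s in Ioc 0 t, (∫⁻ ω, ENNReal.ofReal (G s ω ^ η * G t ω ^ (-η)) ∂P) := by
        rw [lintegral_const_mul' _ _
            (ENNReal.rpow_ne_top_of_nonneg (by linarith) ENNReal.ofReal_ne_top),
          lintegral_lintegral_swap hmeas.aemeasurable]
    _ ≤ ENNReal.ofReal t ^ (η - 1) * ∫⁻ s in Ioc 0 t, 1 := by
        refine mul_le_mul_right (setLIntegral_mono measurable_const fun s hs => ?_) _
        exact hratio s t hs.1.le hs.2
    _ = ENNReal.ofReal t ^ η := by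
        rw [setLIntegral_one, Real.volume_Ioc, sub_zero]
        conv_rhs => rw [← sub_add_cancel η 1,
          ENNReal.rpow_add_of_nonneg _ _ (by linarith) zero_le_one, ENNReal.rpow_one]

lemma lintegral_rpow_neg_mul_add_rpow_le_of_ratio_le_one [SFinite P]
    (hG : Measurable (Function.uncurry G)) (hGnn : ∀ t ω, 0 ≤ G t ω) (hG0 : ∀ᵐ ω ∂P, G 0 ω = 1)
    (hη : 1 ≤ η)
    (hratio : ∀ a b, 0 ≤ a → a ≤ b → ∫⁻ ω, ENNReal.ofReal (G a ω ^ η * G b ω ^ (-η)) ∂P ≤ 1)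
    {x : ℝ} (hx : 0 ≤ x) (ht : 0 ≤ t) :
    ∫⁻ ω, ENNReal.ofReal (G t ω ^ (-η) * (x ^ η⁻¹ + η⁻¹ * ∫ s in Ioc 0 t, G s ω) ^ η) ∂P
      ≤ ENNReal.ofReal (2 ^ (η - 1) * (x + t ^ η)) := by
  have hGt : Measurable fun ω => ENNReal.ofReal (G t ω ^ (-η)) :=
    ((hG.comp (measurable_const.prodMk measurable_id)).pow_const _).ennreal_ofReal
  have hmean : ∫⁻ ω, ENNReal.ofReal (G t ω ^ (-η)) ∂P ≤ 1 :=
    calc ∫⁻ ω, ENNReal.ofReal (G t ω ^ (-η)) ∂P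
        = ∫⁻ ω, ENNReal.ofReal (G 0 ω ^ η * G t ω ^ (-η)) ∂P :=
          lintegral_congr_ae (hG0.mono fun ω h => by simp only [h, one_rpow, one_mul])
      _ ≤ 1 := hratio 0 t le_rfl ht
  calc ∫⁻ ω, ENNReal.ofReal (G t ω ^ (-η) * (x ^ η⁻¹ + η⁻¹ * ∫ s in Ioc 0 t, G s ω) ^ η) ∂P
      ≤ ∫⁻ ω, 2 ^ (η - 1) * (ENNReal.ofReal x * ENNReal.ofReal (G t ω ^ (-η))
          + ENNReal.ofReal (∫ s in Ioc 0 t, G s ω) ^ η * ENNReal.ofReal (G t ω ^ (-η))) ∂P :=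
        lintegral_mono fun ω => ofReal_rpow_neg_mul_add_rpow_le hη (hGnn t ω) hx
          (setIntegral_nonneg measurableSet_Ioc fun s _ => hGnn s ω)
    _ = 2 ^ (η - 1) * (ENNReal.ofReal x * ∫⁻ ω, ENNReal.ofReal (G t ω ^ (-η)) ∂P
          + ∫⁻ ω, ENNReal.ofReal (∫ s in Ioc 0 t, G s ω) ^ η
              * ENNReal.ofReal (G t ω ^ (-η)) ∂P) := by
        rw [lintegral_const_mul' _ _
            (ENNReal.rpow_ne_top_of_nonneg (by linarith) ENNReal.ofNat_ne_top),
          lintegral_add_left (hGt.const_mul _), lintegral_const_mul' _ _ ENNReal.ofReal_ne_top]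
    _ ≤ 2 ^ (η - 1) * (ENNReal.ofReal x * 1 + ENNReal.ofReal t ^ η) := by
        gcongr
        exact lintegral_rpow_integral_mul_rpow_neg_le hG hGnn hη hratio
    _ = ENNReal.ofReal (2 ^ (η - 1) * (x + t ^ η)) := by
        rw [mul_one, ENNReal.ofReal_mul (by positivity), ENNReal.ofReal_add hx (by positivity),
          ← ENNReal.ofReal_rpow_of_nonneg ht (by linarith), ← ENNReal.ofReal_rpow_of_pos two_pos,
          ENNReal.ofReal_ofNat]

end MomentBound

namespace Ramsey

variable {Ω : Type*} {α μ σ η : ℝ} {W c G : ℝ → Ω → ℝ}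

lemma measurable_uncurry [MeasurableSpace Ω] (hW : Measurable (Function.uncurry W))
    (hc : Measurable (Function.uncurry c))
    (hG : ∀ t ω, G t ω = exp ((∫ s in Ioc (0 : ℝ) t, (1 - α) * (μ + c s ω + σ ^ 2 / 2))
      + (1 - α) * σ * W t ω)) :
    Measurable (Function.uncurry G) := by
  have hdrift : Measurable (Function.uncurry fun s ω => (1 - α) * (μ + c s ω + σ ^ 2 / 2)) :=
    ((hc.const_add μ).add_const _).const_mul _
  rw [show Function.uncurry G = _ from funext fun p => hG p.1 p.2]
  exact ((hdrift.setIntegral_Ioc_uncurry 0).add (hW.const_mul _)).exp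

lemma rpow_eq_exp (hηα : (1 - α) * η = 1)
    (hG : ∀ t ω, G t ω = exp ((∫ s in Ioc (0 : ℝ) t, (1 - α) * (μ + c s ω + σ ^ 2 / 2))
      + (1 - α) * σ * W t ω)) (t : ℝ) (ω : Ω) :
    G t ω ^ η = exp ((∫ s in Ioc (0 : ℝ) t, (μ + c s ω + σ ^ 2 / 2)) + σ * W t ω) := by
  rw [hG, ← exp_mul, integral_const_mul]
  congr 1
  linear_combination ((∫ s in Ioc (0 : ℝ) t, (μ + c s ω + σ ^ 2 / 2)) + σ * W t ω) * hηα

lemma rpow_mul_rpow_neg_le (hμ : 0 ≤ μ) (hηα : (1 - α) * η = 1)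
    (hG : ∀ t ω, G t ω = exp ((∫ s in Ioc (0 : ℝ) t, (1 - α) * (μ + c s ω + σ ^ 2 / 2))
      + (1 - α) * σ * W t ω))
    {ω : Ω} (hcnonneg : ∀ s, 0 ≤ c s ω) {a b : ℝ} (ha : 0 ≤ a) (hab : a ≤ b)
    (hcint : IntegrableOn (fun s => c s ω) (Ioc 0 b)) :
    G a ω ^ η * G b ω ^ (-η) ≤ exp (-(σ ^ 2 / 2 * (b - a))) * exp (-σ * (W b ω - W a ω)) := by
  have hint : IntegrableOn (fun s => μ + c s ω + σ ^ 2 / 2) (Ioc 0 b) :=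
    ((integrableOn_const measure_Ioc_lt_top.ne).add hcint).add
      (integrableOn_const measure_Ioc_lt_top.ne)
  have hdrift := mul_sub_le_setIntegral_Ioc_sub (m := σ ^ 2 / 2) ha hab hint
    fun s => by linarith [hcnonneg s]
  rw [rpow_neg (hG b ω ▸ (exp_pos _).le), rpow_eq_exp hηα hG, rpow_eq_exp hηα hG, ← exp_neg,
    ← exp_add, ← exp_add, exp_le_exp]
  linarith

lemma lintegral_rpow_mul_rpow_neg_le_one [MeasurableSpace Ω] {P : Measure Ω} (hμ : 0 ≤ μ)
    (hηα : (1 - α) * η = 1)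
    (hWgauss : ∀ s t : ℝ, 0 ≤ s → s ≤ t →
      P.map (fun ω => W t ω - W s ω) = gaussianReal 0 (Real.toNNReal (t - s)))
    (hcnonneg : ∀ t ω, 0 ≤ c t ω)
    (hcint : ∀ᵐ ω ∂P, ∀ t ≥ (0 : ℝ), IntegrableOn (fun s => c s ω) (Ioc 0 t))
    (hG : ∀ t ω, G t ω = exp ((∫ s in Ioc (0 : ℝ) t, (1 - α) * (μ + c s ω + σ ^ 2 / 2))
      + (1 - α) * σ * W t ω))
    {a b : ℝ} (ha : 0 ≤ a) (hab : a ≤ b) :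
    ∫⁻ ω, ENNReal.ofReal (G a ω ^ η * G b ω ^ (-η)) ∂P ≤ 1 :=
  calc ∫⁻ ω, ENNReal.ofReal (G a ω ^ η * G b ω ^ (-η)) ∂P
      ≤ ∫⁻ ω, ENNReal.ofReal (exp (-(σ ^ 2 / 2 * (b - a))))
          * ENNReal.ofReal (exp (-σ * (W b ω - W a ω))) ∂P := by
        refine lintegral_mono_ae ?_
        filter_upwards [hcint] with ω hω
        rw [← ENNReal.ofReal_mul (exp_pos _).le]
        exact ENNReal.ofReal_le_ofReal
          (rpow_mul_rpow_neg_le hμ hηα hG (hcnonneg · ω) ha hab (hω b (ha.trans hab)))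
    _ = 1 := by
        rw [lintegral_const_mul' _ _ ENNReal.ofReal_ne_top,
          lintegral_exp_mul_of_map_eq_gaussianReal (hWgauss a b ha hab),
          ← ENNReal.ofReal_mul (exp_pos _).le, ← exp_add, Real.coe_toNNReal _ (sub_nonneg.2 hab)]
        ring_nf
        simp

end Ramsey

theorem ramsey_first_moment_estimate_general
    {Ω : Type*} [MeasurableSpace Ω] (P : Measure Ω) [IsProbabilityMeasure P]
    (α μ σ η : ℝ) (hα0 : 0 < α) (hα1 : α < 1) (hμ : 0 < μ)
    (hη : η = 1 / (1 - α))
    (W : ℝ → Ω → ℝ)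
    (hWmeas : Measurable (Function.uncurry W))
    (hW0 : ∀ᵐ ω ∂P, W 0 ω = 0)
    (hWgauss : ∀ s t : ℝ, 0 ≤ s → s ≤ t →
      P.map (fun ω => W t ω - W s ω) =
        ProbabilityTheory.gaussianReal 0 (Real.toNNReal (t - s)))
    (c : ℝ → Ω → ℝ)
    (hcmeas : Measurable (Function.uncurry c))
    (hcnonneg : ∀ t ω, 0 ≤ c t ω)
    (hcint : ∀ᵐ ω ∂P, ∀ t ≥ (0 : ℝ), IntegrableOn (fun s => c s ω) (Ioc 0 t))
    (G : ℝ → Ω → ℝ)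
    (hG : ∀ t ω, G t ω =
      Real.exp ((∫ s in Ioc (0 : ℝ) t, (1 - α) * (μ + c s ω + σ ^ 2 / 2))
        + (1 - α) * σ * W t ω))
    (X : ℝ → ℝ → Ω → ℝ)
    (hX : ∀ x t ω, X x t ω =
      (G t ω) ^ (-η) * (x ^ (1 - α) + (1 - α) * ∫ s in Ioc (0 : ℝ) t, G s ω) ^ η) :
    ∀ x > (0 : ℝ), ∀ t ≥ (0 : ℝ),
      ∫⁻ ω, ENNReal.ofReal (X x t ω) ∂P
        ≤ ENNReal.ofReal ((2 : ℝ) ^ (η - 1) * (x + t ^ η)) := by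
  intro x hx t ht
  have hα' : 0 < 1 - α := by linarith
  have hηα : (1 - α) * η = 1 := by rw [hη]; field_simp
  have hη1 : 1 ≤ η := by rw [hη, le_div_iff₀ hα']; linarith
  have hα_inv : 1 - α = η⁻¹ := by rw [hη, one_div, inv_inv]
  have hG0 : ∀ᵐ ω ∂P, G 0 ω = 1 := by
    filter_upwards [hW0] with ω hω
    simp [hG, hω]
  have hratio := fun a b (ha : 0 ≤ a) (hab : a ≤ b) =>
    Ramsey.lintegral_rpow_mul_rpow_neg_le_one hμ.le hηα hWgauss hcnonneg hcint hG ha hab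
  simp only [hX, hα_inv]
  exact lintegral_rpow_neg_mul_add_rpow_le_of_ratio_le_one
    (Ramsey.measurable_uncurry hWmeas hcmeas hG) (fun t ω => (hG t ω ▸ exp_pos _).le) hG0 hη1
    hratio hx.le ht

/-- Moment estimate `E[X^x_t] ≤ 2^(η-1) (x + t^η)` for the capital-per-capita process
in the stochastic Ramsey problem with Cobb-Douglas production. -/
theorem ramsey_first_moment_estimate
    {Ω : Type*} [MeasurableSpace Ω] (P : Measure Ω) [IsProbabilityMeasure P]
    (α μ σ η : ℝ) (hα0 : 0 < α) (hα1 : α < 1) (hμ : 0 < μ) (hσ : 0 < σ)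
    (hη : η = 1 / (1 - α))
    (W : ℝ → Ω → ℝ)
    (hWmeas : Measurable (Function.uncurry W))
    (hW0 : ∀ᵐ ω ∂P, W 0 ω = 0)
    (hWgauss : ∀ s t : ℝ, 0 ≤ s → s ≤ t →
      P.map (fun ω => W t ω - W s ω) =
        ProbabilityTheory.gaussianReal 0 (Real.toNNReal (t - s)))
    (c : ℝ → Ω → ℝ)
    (hcmeas : Measurable (Function.uncurry c))
    (hcnonneg : ∀ t ω, 0 ≤ c t ω)
    (hcint : ∀ᵐ ω ∂P, ∀ t ≥ (0 : ℝ), IntegrableOn (fun s => c s ω) (Ioc 0 t))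
    (G : ℝ → Ω → ℝ)
    (hG : ∀ t ω, G t ω =
      Real.exp ((∫ s in Ioc (0 : ℝ) t, (1 - α) * (μ + c s ω + σ ^ 2 / 2))
        + (1 - α) * σ * W t ω))
    (X : ℝ → ℝ → Ω → ℝ)
    (hX : ∀ x t ω, X x t ω =
      (G t ω) ^ (-η) * (x ^ (1 - α) + (1 - α) * ∫ s in Ioc (0 : ℝ) t, G s ω) ^ η) :
    ∀ x > (0 : ℝ), ∀ t ≥ (0 : ℝ),
      ∫⁻ ω, ENNReal.ofReal (X x t ω) ∂P
        ≤ ENNReal.ofReal ((2 : ℝ) ^ (η - 1) * (x + t ^ η)) :=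
  ramsey_first_moment_estimate_general P α μ σ η hα0 hα1 hμ hη W hWmeas hW0 hWgauss c hcmeas
    hcnonneg hcint G hG X hX
end

section
/- For all real numbers a ≥ 0, b ≥ 0, η > 1 and ε > 0, one has |a^η − b^η| ≤ ε^{−η} |a − b|^η + (η − 1) (2ε)^{η/(η−1)} ( a^η + b^η ). -/
/-!
Convexity of `x ↦ x ^ η` bounds `a ^ η - b ^ η` by the tangent-line term
`η a ^ (η - 1) (a - b)`. Splitting this product as `((a - b) / ε) · (η ε a ^ (η - 1))` and applying
Young's inequality with the exponents `η` and `q = η / (η - 1)` gives `ε ^ (-η) |a - b| ^ η` plus a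
multiple of `a ^ η`; the constant is controlled by `η ^ q ≤ η 2 ^ q`, which is `η ≤ 2 ^ η`.
-/

open Real

namespace Real

lemma rpow_sub_rpow_le_mul_sub {a b p : ℝ} (ha : 0 ≤ a) (hb : 0 ≤ b) (hp : 1 ≤ p) :
    a ^ p - b ^ p ≤ p * a ^ (p - 1) * (a - b) := by
  have hconv := convexOn_rpow hp
  have hderiv : HasDerivAt (fun x : ℝ ↦ x ^ p) (p * a ^ (p - 1)) a :=
    hasDerivAt_rpow_const (Or.inr hp)
  rcases lt_trichotomy b a with hba | rfl | hab
  · have h := hconv.slope_le_of_hasDerivAt hb ha hba hderiv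
    rw [slope_def_field, div_le_iff₀ (sub_pos.2 hba)] at h
    linarith
  · simp
  · have h := hconv.le_slope_of_hasDerivAt ha hb hab hderiv
    rw [slope_def_field, le_div_iff₀ (sub_pos.2 hab)] at h
    linarith

lemma self_lt_two_rpow {p : ℝ} (hp : 1 ≤ p) : p < 2 ^ p := by
  have h := one_add_mul_self_le_rpow_one_add (s := 1) (by norm_num) hp
  norm_num at h
  linarith

lemma rpow_conjExponent_le_mul_two_rpow {p : ℝ} (hp : 1 < p) :
    p ^ p.conjExponent ≤ p * 2 ^ p.conjExponent := by
  have hp₀ : 0 < p := by linarith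
  have hq : p.conjExponent = 1 + (p - 1)⁻¹ := by
    rw [conjExponent]
    field_simp [(sub_pos.2 hp).ne']
    ring
  calc p ^ p.conjExponent = p * p ^ (p - 1)⁻¹ := by rw [hq, rpow_add hp₀, rpow_one]
    _ ≤ p * (2 ^ p) ^ (p - 1)⁻¹ := by
        gcongr
        exact (self_lt_two_rpow hp.le).le
    _ = p * 2 ^ p.conjExponent := by
        rw [← rpow_mul zero_le_two, conjExponent, div_eq_mul_inv]

lemma rpow_sub_rpow_le_abs_sub_rpow_add {a b η ε : ℝ} (ha : 0 ≤ a) (hb : 0 ≤ b) (hη : 1 < η)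
    (hε : 0 < ε) :
    a ^ η - b ^ η ≤
      ε ^ (-η) * |a - b| ^ η + (η - 1) * (2 * ε) ^ η.conjExponent * a ^ η := by
  set q := η.conjExponent
  have hpq : η.HolderConjugate q := .conjExponent hη
  have hq₀ : 0 < q := hpq.symm.pos
  have hη₀ : 0 < η := hpq.pos
  have hx : |(a - b) / ε| ^ η / η ≤ ε ^ (-η) * |a - b| ^ η := by
    rw [abs_div, abs_of_pos hε, div_rpow (abs_nonneg _) hε.le, rpow_neg hε.le, ← div_eq_inv_mul]
    exact div_le_self (by positivity) hη.le
  have hy : |η * ε * a ^ (η - 1)| ^ q / q ≤ (η - 1) * (2 * ε) ^ q * a ^ η := by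
    rw [abs_of_nonneg (by positivity), mul_rpow (by positivity) (by positivity),
      ← rpow_mul ha, hpq.sub_one_mul_conj, mul_rpow hη₀.le hε.le, mul_rpow zero_le_two hε.le,
      ← hpq.div_conj_eq_sub_one, div_le_iff₀ hq₀]
    have hconst := rpow_conjExponent_le_mul_two_rpow hη
    calc η ^ q * ε ^ q * a ^ η ≤ η * 2 ^ q * ε ^ q * a ^ η := by gcongr
      _ = η / q * (2 ^ q * ε ^ q) * a ^ η * q := by field_simp
  calc a ^ η - b ^ η ≤ η * a ^ (η - 1) * (a - b) := rpow_sub_rpow_le_mul_sub ha hb hη.le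
    _ = (a - b) / ε * (η * ε * a ^ (η - 1)) := by field_simp
    _ ≤ |(a - b) / ε| ^ η / η + |η * ε * a ^ (η - 1)| ^ q / q := young_inequality _ _ hpq
    _ ≤ _ := add_le_add hx hy

end Real

/-- Elementary rpow inequality: for `a, b ≥ 0`, `η > 1` and `ε > 0`,
`|a^η − b^η| ≤ ε^{−η} |a − b|^η + (η − 1) (2ε)^{η/(η−1)} (a^η + b^η)`. -/
theorem rpow_abs_sub_le (a b η ε : ℝ) (ha : 0 ≤ a) (hb : 0 ≤ b)
    (hη : 1 < η) (hε : 0 < ε) :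
    |a ^ η - b ^ η| ≤
      ε ^ (-η) * |a - b| ^ η + (η - 1) * (2 * ε) ^ (η / (η - 1)) * (a ^ η + b ^ η) := by
  have hC : 0 ≤ (η - 1) * (2 * ε) ^ (η / (η - 1)) := by
    have : 0 ≤ η - 1 := by linarith
    positivity
  have hab := rpow_sub_rpow_le_abs_sub_rpow_add ha hb hη hε
  have hba := rpow_sub_rpow_le_abs_sub_rpow_add hb ha hη hε
  rw [abs_sub_comm b a] at hba
  have ha' := mul_nonneg hC (rpow_nonneg ha η)
  have hb' := mul_nonneg hC (rpow_nonneg hb η)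
  rw [abs_sub_le_iff]
  constructor <;> unfold conjExponent at hab hba <;> linarith
end

section
/- For L > 0 define Ũ_L(x,p) := sup_{0 ≤ c ≤ L} ( U(c x) − c x p ) for (x,p) ∈ (0,∞)², and Ũ(p) := sup_{y ≥ 0} ( U(y) − y p ) for p > 0. Then Ũ_L converges to Ũ uniformly on compact subsets of (0,∞)²: for every compact set K ⊆ (0,∞) × (0,∞) and every ε > 0 there exists L₀ > 0 such that |Ũ_L(x,p) − Ũ(p)| ≤ ε for all L ≥ L₀ and all (x,p) ∈ K. -/
open Set Filter Topology

/-- Uniform convergence on compact subsets of `(0,∞)²` of the truncated transforms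
`Ũ_L(x,p) = sup_{0 ≤ c ≤ L} (U(cx) − cxp)` to `Ũ(p) = sup_{y ≥ 0} (U(y) − yp)`. -/
theorem truncated_legendre_uniform_convergence
    (U U' : ℝ → ℝ)
    (hUcont : ContinuousOn U (Ici 0))
    (hUmono : StrictMonoOn U (Ici 0))
    (hUconc : StrictConcaveOn ℝ (Ici 0) U)
    (hU0 : U 0 = 0)
    (hU' : ∀ y > (0 : ℝ), HasDerivAt U (U' y) y)
    (hU'0 : Tendsto U' (𝓝[>] 0) atTop)
    (hU'top : Tendsto U' atTop (𝓝 0))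
    (UL : ℝ → ℝ → ℝ → ℝ)
    (hUL : ∀ L x p, UL L x p =
      sSup {z : ℝ | ∃ c : ℝ, 0 ≤ c ∧ c ≤ L ∧ z = U (c * x) - c * x * p})
    (Ut : ℝ → ℝ)
    (hUt : ∀ p, Ut p = sSup {z : ℝ | ∃ y : ℝ, 0 ≤ y ∧ z = U y - y * p}) :
    ∀ K : Set (ℝ × ℝ), K ⊆ Ioi 0 ×ˢ Ioi 0 → IsCompact K →
      ∀ ε > (0 : ℝ), ∃ L₀ > (0 : ℝ), ∀ L ≥ L₀, ∀ q ∈ K,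
        |UL L q.1 q.2 - Ut q.2| ≤ ε := by
  intro K hK hKc ε hε
  rcases K.eq_empty_or_nonempty with rfl | hKne
  · exact ⟨1, one_pos, fun L _ q hq => absurd hq (notMem_empty q)⟩
  -- minimum of the first and second coordinates on K
  obtain ⟨qa, hqaK, hqa⟩ := hKc.exists_isMinOn hKne continuous_fst.continuousOn
  obtain ⟨qb, hqbK, hqb⟩ := hKc.exists_isMinOn hKne continuous_snd.continuousOn
  have ha : (0 : ℝ) < qa.1 := (hK hqaK).1
  have hb : (0 : ℝ) < qb.2 := (hK hqbK).2
  -- choose Y with U' Y < b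
  obtain ⟨Y, hYb, hY0⟩ : ∃ Y : ℝ, U' Y < qb.2 ∧ 0 < Y :=
    ((hU'top.eventually_lt_const hb).and (eventually_gt_atTop 0)).exists
  refine ⟨max (Y / qa.1) 1, lt_of_lt_of_le one_pos (le_max_right _ _), fun L hL q hq => ?_⟩
  obtain ⟨x, p⟩ := q
  have hx : (0 : ℝ) < x := (hK hq).1
  have hp : (0 : ℝ) < p := (hK hq).2
  have hax : qa.1 ≤ x := hqa hq
  have hbp : qb.2 ≤ p := hqb hq
  have hYLx : Y ≤ L * x := by
    have h1 : Y / qa.1 ≤ L := le_trans (le_max_left _ _) hL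
    calc Y = (Y / qa.1) * qa.1 := by field_simp
    _ ≤ L * x := by
      apply mul_le_mul h1 hax (le_of_lt ha)
      exact le_trans (div_nonneg hY0.le ha.le) h1
  -- the truncated set T and the full set S
  set T : Set ℝ := {z : ℝ | ∃ c : ℝ, 0 ≤ c ∧ c ≤ L ∧ z = U (c * x) - c * x * p} with hT
  set S : Set ℝ := {z : ℝ | ∃ y : ℝ, 0 ≤ y ∧ z = U y - y * p} with hS
  have hL0 : (0 : ℝ) ≤ L := le_trans (le_trans (div_nonneg hY0.le ha.le) (le_max_left _ _)) hL
  have hTne : T.Nonempty := ⟨0, 0, le_refl 0, hL0, by simp [hU0]⟩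
  -- T is the image of a compact set under a continuous function, hence bounded above
  have hTim : T = (fun c => U (c * x) - c * x * p) '' Icc 0 L := by
    ext z
    simp only [hT, mem_setOf_eq, mem_image, mem_Icc]
    constructor
    · rintro ⟨c, h1, h2, rfl⟩; exact ⟨c, ⟨h1, h2⟩, rfl⟩
    · rintro ⟨c, ⟨h1, h2⟩, rfl⟩; exact ⟨c, h1, h2, rfl⟩
  have hcontf : ContinuousOn (fun c => U (c * x) - c * x * p) (Icc 0 L) := by
    apply ContinuousOn.sub
    · apply hUcont.comp (continuous_mul_right x).continuousOn
      intro c hc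
      exact mul_nonneg hc.1 hx.le
    · exact ((continuous_mul_right x).mul continuous_const).continuousOn
  have hTbdd : BddAbove T := by
    rw [hTim]
    exact (isCompact_Icc.image_of_continuousOn hcontf).bddAbove
  -- every element of S is ≤ sSup T
  have hSle : ∀ z ∈ S, z ≤ sSup T := by
    rintro z ⟨y, hy0, rfl⟩
    by_cases hyLx : y ≤ L * x
    · -- y is attainable in the truncated set
      apply le_csSup hTbdd
      refine ⟨y / x, div_nonneg hy0 hx.le, ?_, by rw [div_mul_cancel₀ _ hx.ne']⟩
      rw [div_le_iff₀ hx]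
      exact hyLx
    · push_neg at hyLx
      have hYy : Y < y := lt_of_le_of_lt hYLx hyLx
      -- U y - U Y ≤ U' Y * (y - Y) by concavity (tangent line)
      have hslope : slope U Y y ≤ U' Y :=
        hUconc.concaveOn.slope_le_of_hasDerivAt hY0.le (le_trans hY0.le hYy.le) hYy
          (hU' Y hY0)
      rw [slope_def_field, div_le_iff₀ (by linarith)] at hslope
      have hkey : U y - y * p ≤ U Y - Y * p := by
        have hU'Yp : U' Y ≤ p := le_trans hYb.le hbp
        nlinarith [mul_le_mul_of_nonneg_left hU'Yp (le_of_lt (show (0:ℝ) < y - Y by linarith))]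
      refine le_trans hkey (le_csSup hTbdd ?_)
      refine ⟨Y / x, div_nonneg hY0.le hx.le, ?_, by rw [div_mul_cancel₀ _ hx.ne']⟩
      rw [div_le_iff₀ hx]
      exact hYLx
  have hSne : S.Nonempty := ⟨0, 0, le_refl 0, by simp [hU0]⟩
  have hTS : T ⊆ S := by
    rintro z ⟨c, h1, _, rfl⟩
    exact ⟨c * x, mul_nonneg h1 hx.le, rfl⟩
  have hSbdd : BddAbove S := ⟨sSup T, hSle⟩
  have heq : sSup T = sSup S :=
    le_antisymm (csSup_le_csSup hSbdd hTne hTS) (csSup_le hSne hSle)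
  rw [hUL, hUt]
  simp only [← hT, ← hS, heq, sub_self, abs_zero]
  exact hε.le
end

section
/- The scale-function integral toward +∞ in Feller's test for explosion diverges: ∫_ℓ^∞ exp( −2 Φ(r) ) dr = ∞, where Φ(r) := ∫_ℓ^r (y^α − μ y − h(y)) / (σ² y²) dy for r ≥ ℓ. -/
/-!
Since `μ y + h y ≥ 0`, the integrand of `Φ` is at most `y ^ (α - 2) / σ ^ 2`, whose integral over
`[ℓ, ∞)` converges because `α < 1`. Hence `Φ` is bounded above on `[ℓ, ∞)`, so `exp (-2 Φ)` is
bounded below by a positive constant there and its integral over the half-line is infinite.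
-/

open Set MeasureTheory

theorem integral_rpow_le_of_lt_neg_one {ℓ r s : ℝ} (hℓ : 0 < ℓ) (hr : ℓ ≤ r) (hs : s < -1) :
    ∫ y in ℓ..r, y ^ s ≤ -ℓ ^ (s + 1) / (s + 1) := by
  have h0 : (0 : ℝ) ∉ uIcc ℓ r := by
    rw [uIcc_of_le hr]
    exact fun h0 => absurd h0.1 (not_le.mpr hℓ)
  rw [integral_rpow (Or.inr ⟨hs.ne, h0⟩), sub_div, neg_div]
  have : r ^ (s + 1) / (s + 1) ≤ 0 :=
    div_nonpos_of_nonneg_of_nonpos (Real.rpow_nonneg (hℓ.le.trans hr) _) (by linarith)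
  linarith

theorem div_sq_mul_sq_le_rpow_div {α σ y c : ℝ} (hy : 0 < y) (hc : 0 ≤ c) :
    (y ^ α - c) / (σ ^ 2 * y ^ 2) ≤ y ^ (α - 2) / σ ^ 2 := by
  calc (y ^ α - c) / (σ ^ 2 * y ^ 2) ≤ y ^ α / (σ ^ 2 * y ^ 2) :=
        div_le_div_of_nonneg_right (by linarith) (by positivity)
    _ = y ^ (α - 2) / σ ^ 2 := by
        rw [Real.rpow_sub hy, Real.rpow_two]
        field_simp

theorem integral_feller_drift_le {α μ σ ℓ r : ℝ} (hα1 : α < 1) (hμ : 0 ≤ μ) (hσ : 0 < σ)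
    (hℓ : 0 < ℓ) (hr : ℓ ≤ r) {h : ℝ → ℝ} (hcont : ContinuousOn h (Ioi 0))
    (hnonneg : ∀ y > (0 : ℝ), 0 ≤ h y) :
    ∫ y in ℓ..r, (y ^ α - μ * y - h y) / (σ ^ 2 * y ^ 2)
      ≤ ℓ ^ (α - 1) / ((1 - α) * σ ^ 2) := by
  have hpos : ∀ y ∈ uIcc ℓ r, 0 < y := by
    rw [uIcc_of_le hr]
    exact fun y hy => hℓ.trans_le hy.1
  have hdrift :
      IntervalIntegrable (fun y => (y ^ α - μ * y - h y) / (σ ^ 2 * y ^ 2)) volume ℓ r := by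
    have hnum : ContinuousOn (fun y => y ^ α - μ * y - h y) (uIcc ℓ r) :=
      ((continuousOn_id.rpow_const fun y hy => Or.inl (hpos y hy).ne').sub
        (continuousOn_const.mul continuousOn_id)).sub (hcont.mono fun y hy => hpos y hy)
    refine (hnum.div (by fun_prop) fun y hy => ?_).intervalIntegrable
    have := (hpos y hy).ne'
    positivity
  have hpow : IntervalIntegrable (fun y : ℝ => y ^ (α - 2)) volume ℓ r :=
    intervalIntegral.intervalIntegrable_rpow (Or.inr fun h0 => (hpos 0 h0).false)
  calc ∫ y in ℓ..r, (y ^ α - μ * y - h y) / (σ ^ 2 * y ^ 2)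
      ≤ ∫ y in ℓ..r, y ^ (α - 2) / σ ^ 2 := by
        refine intervalIntegral.integral_mono_on hr hdrift (hpow.div_const _) fun y hy => ?_
        have hy : 0 < y := hℓ.trans_le hy.1
        rw [sub_sub]
        exact div_sq_mul_sq_le_rpow_div hy (add_nonneg (mul_nonneg hμ hy.le) (hnonneg y hy))
    _ ≤ -ℓ ^ (α - 2 + 1) / (α - 2 + 1) / σ ^ 2 := by
        rw [intervalIntegral.integral_div]
        exact div_le_div_of_nonneg_right
          (integral_rpow_le_of_lt_neg_one hℓ hr (by linarith)) (sq_nonneg σ)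
    _ = ℓ ^ (α - 1) / ((1 - α) * σ ^ 2) := by
        rw [show α - 2 + 1 = α - 1 by ring, div_div, ← neg_div_neg_eq, neg_neg, ← neg_mul,
          neg_sub]

theorem setLIntegral_Ioi_eq_top_of_le {a : ℝ} {c : ENNReal} (hc : c ≠ 0) {f : ℝ → ENNReal}
    (hf : ∀ r > a, c ≤ f r) : ∫⁻ r in Ioi a, f r = ⊤ := by
  refine top_le_iff.mp (le_trans ?_ (setLIntegral_mono' measurableSet_Ioi hf))
  rw [setLIntegral_const, Real.volume_Ioi, ENNReal.mul_top hc]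

theorem feller_test_integral_at_infinity_diverges_general
    (α μ σ ℓ : ℝ) (hα1 : α < 1) (hμ : 0 < μ) (hσ : 0 < σ) (hℓ : 0 < ℓ)
    (h : ℝ → ℝ) (hcont : ContinuousOn h (Ioi 0)) (hnonneg : ∀ y > (0 : ℝ), 0 ≤ h y)
    (Φ : ℝ → ℝ)
    (hΦ : ∀ r ≥ ℓ, Φ r = ∫ y in ℓ..r, (y ^ α - μ * y - h y) / (σ ^ 2 * y ^ 2)) :
    ∫⁻ r in Ioi ℓ, ENNReal.ofReal (Real.exp (-2 * Φ r)) = ⊤ := by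
  set C := ℓ ^ (α - 1) / ((1 - α) * σ ^ 2)
  refine setLIntegral_Ioi_eq_top_of_le (c := ENNReal.ofReal (Real.exp (-2 * C)))
    (ENNReal.ofReal_pos.mpr (Real.exp_pos _)).ne' fun r hr => ?_
  have hΦC : Φ r ≤ C := by
    rw [hΦ r hr.le]
    exact integral_feller_drift_le hα1 hμ.le hσ hℓ hr.le hcont hnonneg
  exact ENNReal.ofReal_le_ofReal (Real.exp_le_exp.mpr (by linarith))

/-- Feller's test toward `+∞`: the scale-function integral
`∫_ℓ^∞ exp(−2Φ(r)) dr` diverges, where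
`Φ(r) = ∫_ℓ^r (y^α − μy − h(y))/(σ²y²) dy`. -/
theorem feller_test_integral_at_infinity_diverges
    (α μ σ ℓ : ℝ) (hα0 : 0 < α) (hα1 : α < 1) (hμ : 0 < μ) (hσ : 0 < σ) (hℓ : 0 < ℓ)
    (h : ℝ → ℝ) (hcont : ContinuousOn h (Ioi 0)) (hnonneg : ∀ y > (0 : ℝ), 0 ≤ h y)
    (Φ : ℝ → ℝ)
    (hΦ : ∀ r ≥ ℓ, Φ r = ∫ y in ℓ..r, (y ^ α - μ * y - h y) / (σ ^ 2 * y ^ 2)) :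
    ∫⁻ r in Ioi ℓ, ENNReal.ofReal (Real.exp (-2 * Φ r)) = ⊤ :=
  feller_test_integral_at_infinity_diverges_general α μ σ ℓ hα1 hμ hσ hℓ h hcont hnonneg Φ hΦ
end

section
/- The scale-function integral toward 0 in Feller's test for explosion diverges: ∫_0^ℓ exp( 2 Ψ(r) ) dr = ∞, where Ψ(r) := ∫_r^ℓ (y^α − μ y − h(y)) / (σ² y²) dy for 0 < r ≤ ℓ. -/
open Set Filter Topology MeasureTheory Interval

/-! Near `0` both the drain `h(y) = o(y^α)` and the term `μy = o(y^α)` are negligible against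
`y^α`, so the integrand of `Ψ` is at least `y^(α-2)/(2σ²)` on some `(0, δ]`. Integrating,
`2Ψ(r) ≥ B r^(α-1) + C` there with `B > 0`. Since `α < 1`, the bound `exp x ≥ x^n / n!` with
`n (1 - α) ≥ 1` gives `exp (2Ψ(r)) ≥ K r^s` with `s ≤ -1`, which is not integrable at `0`. -/

/-- `b(y) / (σy)²` for the drift `b(y) = y^α − μy − h(y)` and volatility `σy` of the capital
diffusion. -/
noncomputable def driftRatio (α μ σ : ℝ) (h : ℝ → ℝ) (y : ℝ) : ℝ :=
  (y ^ α - μ * y - h y) / (σ ^ 2 * y ^ 2)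

theorem intervalIntegrable_driftRatio {α σ : ℝ} (μ : ℝ) (hσ : σ ≠ 0) {h : ℝ → ℝ}
    (hcont : ContinuousOn h (Ioi 0)) {a b : ℝ} (ha : 0 < a) (hb : 0 < b) :
    IntervalIntegrable (driftRatio α μ σ h) volume a b := by
  have hpos : ∀ y ∈ [[a, b]], 0 < y := fun y hy => (lt_min ha hb).trans_le hy.1
  refine ContinuousOn.intervalIntegrable (ContinuousOn.div ?_ (by fun_prop) ?_)
  · refine ((continuousOn_id.rpow_const fun y hy => Or.inl (hpos y hy).ne').sub
      (by fun_prop)).sub (hcont.mono fun y hy => hpos y hy)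
  · exact fun y hy => by have := hpos y hy; positivity

theorem tendsto_drift_div_rpow_nhdsGT_zero {α : ℝ} (hα : α < 1) (μ : ℝ) {h : ℝ → ℝ}
    (hzero : Tendsto (fun y => h y / y ^ α) (𝓝[>] 0) (𝓝 0)) :
    Tendsto (fun y => (y ^ α - μ * y - h y) / y ^ α) (𝓝[>] 0) (𝓝 1) := by
  have hpow : Tendsto (fun y : ℝ => y ^ (1 - α)) (𝓝[>] 0) (𝓝 0) := by
    simpa [Real.zero_rpow (sub_pos.2 hα).ne'] using
      (Real.continuousAt_rpow_const 0 (1 - α) (Or.inr (sub_pos.2 hα).le)).tendsto.mono_left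
        nhdsWithin_le_nhds
  have hlim : Tendsto (fun y => 1 - μ * y ^ (1 - α) - h y / y ^ α) (𝓝[>] 0) (𝓝 1) := by
    simpa using (tendsto_const_nhds.sub (hpow.const_mul μ)).sub hzero
  refine hlim.congr' ?_
  filter_upwards [self_mem_nhdsWithin] with y (hy : 0 < y)
  have hyα : y ^ α ≠ 0 := (Real.rpow_pos_of_pos hy α).ne'
  rw [Real.rpow_sub hy, Real.rpow_one]
  field_simp

theorem eventually_rpow_le_driftRatio {α : ℝ} (hα : α < 1) (μ σ : ℝ) {h : ℝ → ℝ}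
    (hzero : Tendsto (fun y => h y / y ^ α) (𝓝[>] 0) (𝓝 0)) :
    ∀ᶠ y in 𝓝[>] 0, (2 * σ ^ 2)⁻¹ * y ^ (α - 2) ≤ driftRatio α μ σ h y := by
  filter_upwards [(tendsto_drift_div_rpow_nhdsGT_zero hα μ hzero).eventually_const_le
    (show (1 / 2 : ℝ) < 1 by norm_num), self_mem_nhdsWithin] with y hy (hy0 : 0 < y)
  have hyα : 0 < y ^ α := Real.rpow_pos_of_pos hy0 α
  rw [le_div_iff₀ hyα] at hy
  calc (2 * σ ^ 2)⁻¹ * y ^ (α - 2) = y ^ α / 2 / (σ ^ 2 * y ^ 2) := by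
        rw [Real.rpow_sub hy0, Real.rpow_two]; ring
    _ ≤ driftRatio α μ σ h y := div_le_div_of_nonneg_right (by linarith) (by positivity)

theorem mul_rpow_sub_div_le_integral {f : ℝ → ℝ} {a b c p : ℝ} (ha : 0 < a) (hab : a ≤ b)
    (hp : p ≠ -1) (hf : IntervalIntegrable f volume a b) (hle : ∀ y ∈ Icc a b, c * y ^ p ≤ f y) :
    c * ((b ^ (p + 1) - a ^ (p + 1)) / (p + 1)) ≤ ∫ y in a..b, f y := by
  have h0 : (0 : ℝ) ∉ [[a, b]] := fun h0 => (lt_min ha (ha.trans_le hab)).not_ge h0.1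
  rw [← integral_rpow (Or.inr ⟨hp, h0⟩), ← intervalIntegral.integral_const_mul]
  refine intervalIntegral.integral_mono_on hab ?_ hf hle
  exact (intervalIntegral.intervalIntegrable_rpow (Or.inr h0)).const_mul c

theorem add_mul_rpow_sub_div_le_of_eq_integral {F Ψ : ℝ → ℝ} {c p δ ℓ : ℝ} (hp : p ≠ -1)
    (hδ : 0 < δ) (hδℓ : δ ≤ ℓ) (hF : ∀ {a b : ℝ}, 0 < a → 0 < b → IntervalIntegrable F volume a b)
    (hΨ : ∀ r, 0 < r → r ≤ ℓ → Ψ r = ∫ y in r..ℓ, F y) (hle : ∀ y ∈ Ioc 0 δ, c * y ^ p ≤ F y)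
    {r : ℝ} (hr : r ∈ Ioc 0 δ) :
    Ψ δ + c * ((δ ^ (p + 1) - r ^ (p + 1)) / (p + 1)) ≤ Ψ r := by
  have hsplit : Ψ r = (∫ y in r..δ, F y) + Ψ δ := by
    rw [hΨ r hr.1 (hr.2.trans hδℓ), hΨ δ hδ hδℓ]
    exact (intervalIntegral.integral_add_adjacent_intervals (hF hr.1 hδ)
      (hF hδ (hδ.trans_le hδℓ))).symm
  have hint := mul_rpow_sub_div_le_integral hr.1 hr.2 hp (hF hr.1 hδ)
    fun y hy => hle y ⟨hr.1.trans_le hy.1, hy.2⟩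
  linarith

theorem pow_div_factorial_mul_rpow_le_exp {B r : ℝ} (hB : 0 ≤ B) (hr : 0 ≤ r) (q : ℝ) (n : ℕ) :
    B ^ n / n.factorial * r ^ (q * n) ≤ Real.exp (B * r ^ q) := by
  calc B ^ n / n.factorial * r ^ (q * n) = (B * r ^ q) ^ n / n.factorial := by
        rw [mul_pow, Real.rpow_mul_natCast hr]; ring
    _ ≤ Real.exp (B * r ^ q) := Real.pow_div_factorial_le_exp _ (by positivity) n

theorem lintegral_Ioo_ofReal_rpow_eq_top {δ s : ℝ} (hδ : 0 < δ) (hs : s ≤ -1) :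
    ∫⁻ r in Ioo 0 δ, ENNReal.ofReal (r ^ s) = ⊤ := by
  by_contra hfin
  have hnonneg : 0 ≤ᵐ[volume.restrict (Ioo 0 δ)] fun r : ℝ => r ^ s :=
    (ae_restrict_iff' measurableSet_Ioo).2 (ae_of_all _ fun r hr => Real.rpow_nonneg hr.1.le s)
  have hint := (lintegral_ofReal_ne_top_iff_integrable
    (by fun_prop : Measurable fun r : ℝ => r ^ s).aestronglyMeasurable hnonneg).1 hfin
  exact hs.not_gt ((intervalIntegral.integrableOn_Ioo_rpow_iff hδ).1 hint)

theorem lintegral_Ioo_ofReal_eq_top_of_mul_rpow_le {f : ℝ → ℝ} {δ K s : ℝ} (hδ : 0 < δ)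
    (hK : 0 < K) (hs : s ≤ -1) (hf : ∀ r ∈ Ioo 0 δ, K * r ^ s ≤ f r) :
    ∫⁻ r in Ioo 0 δ, ENNReal.ofReal (f r) = ⊤ := by
  refine top_unique ?_
  calc (⊤ : ENNReal) = ENNReal.ofReal K * ∫⁻ r in Ioo 0 δ, ENNReal.ofReal (r ^ s) := by
        rw [lintegral_Ioo_ofReal_rpow_eq_top hδ hs, ENNReal.mul_top (by simpa using hK)]
    _ = ∫⁻ r in Ioo 0 δ, ENNReal.ofReal (K * r ^ s) := by
        rw [← lintegral_const_mul _ (by fun_prop)]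
        refine setLIntegral_congr_fun measurableSet_Ioo fun r _ => ?_
        rw [ENNReal.ofReal_mul hK.le]
    _ ≤ ∫⁻ r in Ioo 0 δ, ENNReal.ofReal (f r) :=
        setLIntegral_mono' measurableSet_Ioo fun r hr => ENNReal.ofReal_le_ofReal (hf r hr)

theorem lintegral_Ioo_ofReal_exp_eq_top_of_mul_rpow_add_le {g : ℝ → ℝ} {δ B C q : ℝ}
    (hδ : 0 < δ) (hB : 0 < B) (hq : q < 0) (hg : ∀ r ∈ Ioo 0 δ, B * r ^ q + C ≤ g r) :
    ∫⁻ r in Ioo 0 δ, ENNReal.ofReal (Real.exp (g r)) = ⊤ := by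
  obtain ⟨n, hn⟩ := exists_nat_ge (-1 / q)
  have hs : q * n ≤ -1 := by
    rw [div_le_iff_of_neg hq] at hn
    linarith
  refine lintegral_Ioo_ofReal_eq_top_of_mul_rpow_le hδ (K := Real.exp C * (B ^ n / n.factorial))
    (by positivity) hs fun r hr => ?_
  calc Real.exp C * (B ^ n / n.factorial) * r ^ (q * n)
      ≤ Real.exp C * Real.exp (B * r ^ q) := by
        rw [mul_assoc]
        gcongr
        exact pow_div_factorial_mul_rpow_le_exp hB.le hr.1.le q n
    _ ≤ Real.exp (g r) := by
        rw [← Real.exp_add]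
        gcongr
        linarith [hg r hr]

theorem feller_test_integral_at_zero_diverges_general
    (α μ σ ℓ : ℝ) (hα1 : α < 1) (hσ : 0 < σ) (hℓ : 0 < ℓ)
    (h : ℝ → ℝ) (hcont : ContinuousOn h (Ioi 0))
    (hzero : Tendsto (fun y => h y / y ^ α) (𝓝[>] 0) (𝓝 0))
    (Ψ : ℝ → ℝ)
    (hΨ : ∀ r : ℝ, 0 < r → r ≤ ℓ →
      Ψ r = ∫ y in r..ℓ, (y ^ α - μ * y - h y) / (σ ^ 2 * y ^ 2)) :
    ∫⁻ r in Ioo 0 ℓ, ENNReal.ofReal (Real.exp (2 * Ψ r)) = ⊤ := by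
  obtain ⟨u, hu, hus⟩ :=
    mem_nhdsGT_iff_exists_Ioc_subset.1 (eventually_rpow_le_driftRatio hα1 μ σ hzero)
  obtain ⟨δ, hδ, hδℓ, hδu⟩ : ∃ δ, 0 < δ ∧ δ ≤ ℓ ∧ δ ≤ u :=
    ⟨min u ℓ, lt_min hu hℓ, min_le_right u ℓ, min_le_left u ℓ⟩
  set c := (2 * σ ^ 2)⁻¹
  have hΨ_ge (r : ℝ) (hr : r ∈ Ioo 0 δ) :
      Ψ δ - c / (1 - α) * (δ ^ (α - 1) - r ^ (α - 1)) ≤ Ψ r := by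
    have := add_mul_rpow_sub_div_le_of_eq_integral (p := α - 2) (by linarith) hδ hδℓ
      (intervalIntegrable_driftRatio μ hσ.ne' hcont) hΨ
      (fun y hy => hus ⟨hy.1, hy.2.trans hδu⟩) (Ioo_subset_Ioc_self hr)
    have hflip (x : ℝ) : c * (x / (α - 1)) = -(c / (1 - α) * x) := by
      rw [← neg_sub 1 α, div_neg]
      ring
    rwa [show α - 2 + 1 = α - 1 by ring, hflip, ← sub_eq_add_neg] at this
  refine top_unique (le_trans ?_ (lintegral_mono_set (Ioo_subset_Ioo_right hδℓ)))
  refine (lintegral_Ioo_ofReal_exp_eq_top_of_mul_rpow_add_le hδ (q := α - 1)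
    (B := 2 * (c / (1 - α))) (C := 2 * Ψ δ - 2 * (c / (1 - α)) * δ ^ (α - 1))
    (by have := sub_pos.2 hα1; positivity) (by linarith) fun r hr => ?_).ge
  linarith [hΨ_ge r hr]

/-- Feller's test toward `0`: the scale-function integral
`∫_0^ℓ exp(2Ψ(r)) dr` diverges, where
`Ψ(r) = ∫_r^ℓ (y^α − μy − h(y))/(σ²y²) dy` and `h(y)/y^α → 0` as `y ↓ 0`. -/
theorem feller_test_integral_at_zero_diverges
    (α μ σ ℓ : ℝ) (hα0 : 0 < α) (hα1 : α < 1) (hμ : 0 < μ) (hσ : 0 < σ) (hℓ : 0 < ℓ)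
    (h : ℝ → ℝ) (hcont : ContinuousOn h (Ioi 0)) (hnonneg : ∀ y > (0 : ℝ), 0 ≤ h y)
    (hzero : Tendsto (fun y => h y / y ^ α) (𝓝[>] 0) (𝓝 0))
    (Ψ : ℝ → ℝ)
    (hΨ : ∀ r : ℝ, 0 < r → r ≤ ℓ →
      Ψ r = ∫ y in r..ℓ, (y ^ α - μ * y - h y) / (σ ^ 2 * y ^ 2)) :
    ∫⁻ r in Ioo 0 ℓ, ENNReal.ofReal (Real.exp (2 * Ψ r)) = ⊤ :=
  feller_test_integral_at_zero_diverges_general α μ σ ℓ hα1 hσ hℓ h hcont hzero Ψ hΨ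
end

section
/- The derivative of v explodes at the origin: lim_{x↓0} v'(x) = ∞. -/
/-!
If `v'` stayed bounded near `0`, it would increase to a finite limit `L` as `x ↓ 0`, and `v` would
have a finite limit `v₀` with `v x ≤ v₀ + L x`. Since `v'' ≤ 0`, the equation gives
`β v ≤ (x ^ α - μ x) v' + Ũ(v')`, where `Ũ p = U (I p) - p I p` is the convex, decreasing dual of
`U`; letting `x ↓ 0` yields `β v₀ ≤ Ũ(L)`. Fed back into the equation this gives
`½ σ² x² v'' ≤ (β + μ) L x - (L / 2) x ^ α ≤ -(L / 4) x ^ α` near `0`, so `v'' ≤ -c x ^ (α - 2)`,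
and integrating from `x` to a fixed point forces `v' x ≥ C x ^ (α - 1) - C' → ∞`.
-/

open Set Filter Topology

theorem ConcaveOn.sub_le_mul_sub_of_hasDerivAt {S : Set ℝ} {f : ℝ → ℝ} {f' a b : ℝ}
    (hf : ConcaveOn ℝ S f) (ha : a ∈ S) (hb : b ∈ S) (hf' : HasDerivAt f f' a) :
    f b - f a ≤ f' * (b - a) := by
  rcases lt_trichotomy a b with hab | rfl | hba
  · have := hf.slope_le_of_hasDerivAt ha hb hab hf'
    rwa [slope_def_field, div_le_iff₀ (sub_pos.2 hab)] at this
  · simp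
  · have := hf.le_slope_of_hasDerivAt hb ha hba hf'
    rw [slope_def_field, le_div_iff₀ (sub_pos.2 hba)] at this
    linarith

theorem ConcaveOn.antitoneOn_of_hasDerivAt {S : Set ℝ} {f f' : ℝ → ℝ} (hf : ConcaveOn ℝ S f)
    (hf' : ∀ x ∈ S, HasDerivAt f (f' x) x) : AntitoneOn f' S := by
  intro x hx y hy hxy
  rcases hxy.eq_or_lt with rfl | hxy
  · rfl
  have h₁ := hf.sub_le_mul_sub_of_hasDerivAt hx hy (hf' x hx)
  have h₂ := hf.sub_le_mul_sub_of_hasDerivAt hy hx (hf' y hy)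
  exact le_of_mul_le_mul_right (by linarith) (sub_pos.2 hxy)

theorem concaveOn_of_hasDerivAt2_nonpos {D : Set ℝ} {f f' f'' : ℝ → ℝ} (hD : Convex ℝ D)
    (hDo : IsOpen D) (hf' : ∀ x ∈ D, HasDerivAt f (f' x) x)
    (hf'' : ∀ x ∈ D, HasDerivAt f' (f'' x) x) (hf''₀ : ∀ x ∈ D, f'' x ≤ 0) :
    ConcaveOn ℝ D f := by
  refine concaveOn_of_hasDerivWithinAt2_nonpos (f' := f') (f'' := f'') hD
    (fun x hx => (hf' x hx).continuousAt.continuousWithinAt) ?_ ?_ ?_ <;>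
  rw [hDo.interior_eq]
  · exact fun x hx => (hf' x hx).hasDerivWithinAt
  · exact fun x hx => (hf'' x hx).hasDerivWithinAt
  · exact hf''₀

theorem AntitoneOn.exists_tendsto_nhdsGT_of_not_tendsto_atTop {f : ℝ → ℝ} {a : ℝ}
    (hf : AntitoneOn f (Ioi a)) (h : ¬Tendsto f (𝓝[>] a) atTop) :
    ∃ L, (∀ x > a, f x ≤ L) ∧ Tendsto f (𝓝[>] a) (𝓝 L) := by
  have hbdd : BddAbove (f '' Ioi a) := by
    by_contra hbdd
    refine h (tendsto_atTop.2 fun b => ?_)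
    obtain ⟨_, ⟨x, hx, rfl⟩, hbx⟩ := not_bddAbove_iff.1 hbdd b
    filter_upwards [Ioc_mem_nhdsGT hx] with y hy
    exact hbx.le.trans (hf hy.1 hx hy.2)
  exact ⟨_, fun x hx => le_csSup hbdd (mem_image_of_mem f hx), hf.tendsto_nhdsGT hbdd⟩

theorem tendsto_nhdsGT_zero_atTop_of_deriv_le_neg_rpow {f f' : ℝ → ℝ} {c q : ℝ} (hc : 0 < c)
    (hq : q < -1) (hf : ∀ x > 0, HasDerivAt f (f' x) x)
    (hf' : ∀ᶠ x in 𝓝[>] 0, f' x ≤ -c * x ^ q) : Tendsto f (𝓝[>] 0) atTop := by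
  obtain ⟨b, hb, hbf'⟩ := mem_nhdsGT_iff_exists_Ioc_subset.1 hf'
  have hq1 : q + 1 < 0 := by linarith
  set k := c / (q + 1)
  have hderiv : ∀ x > 0, HasDerivAt (fun x => f x + k * x ^ (q + 1)) (f' x + c * x ^ q) x := by
    intro x hx
    have hpow : HasDerivAt (fun x => x ^ (q + 1)) ((q + 1) * x ^ (q + 1 - 1)) x :=
      Real.hasDerivAt_rpow_const (Or.inl hx.ne')
    refine ((hf x hx).add (hpow.const_mul k)).congr_deriv ?_
    rw [add_sub_cancel_right, ← mul_assoc, div_mul_cancel₀ c hq1.ne]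
  have hanti : AntitoneOn (fun x => f x + k * x ^ (q + 1)) (Ioc 0 b) := by
    refine antitoneOn_of_hasDerivWithinAt_nonpos (f' := fun x => f' x + c * x ^ q)
      (convex_Ioc 0 b) (fun x hx => (hderiv x hx.1).continuousAt.continuousWithinAt) ?_ ?_ <;>
    rw [interior_Ioc]
    · exact fun x hx => (hderiv x hx.1).hasDerivWithinAt
    · intro x hx
      have : f' x ≤ -c * x ^ q := hbf' (Ioo_subset_Ioc_self hx)
      linarith
  have hpow : Tendsto (fun x : ℝ => (f b + k * b ^ (q + 1)) + -k * x ^ (q + 1)) (𝓝[>] 0) atTop :=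
    tendsto_atTop_add_const_left _ _
      ((tendsto_rpow_neg_nhdsGT_zero hq1).const_mul_atTop
        (neg_pos.2 (div_neg_of_pos_of_neg hc hq1)))
  refine tendsto_atTop_mono' _ ?_ hpow
  filter_upwards [Ioc_mem_nhdsGT hb] with x hx
  have := hanti hx (right_mem_Ioc.2 hb) hx.2
  simp only at this
  linarith

/-- The convex dual `Ũ p = sup_{y > 0} (U y - p * y)`, written with its maximiser `y = I p`. -/
def convexDual (U I : ℝ → ℝ) (p : ℝ) : ℝ := U (I p) - p * I p

section ConvexDual

variable {U U' I : ℝ → ℝ}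

theorem sub_mul_le_convexDual (hU : ConcaveOn ℝ (Ioi 0) U)
    (hU' : ∀ y > 0, HasDerivAt U (U' y) y) (hIpos : ∀ p > 0, 0 < I p)
    (hI : ∀ p > 0, U' (I p) = p) {p y : ℝ} (hp : 0 < p) (hy : 0 < y) :
    U y - p * y ≤ convexDual U I p := by
  have := hU.sub_le_mul_sub_of_hasDerivAt (hIpos p hp) hy (hU' _ (hIpos p hp))
  rw [hI p hp] at this
  rw [convexDual]
  linarith

theorem convexOn_convexDual (hU : ConcaveOn ℝ (Ioi 0) U)
    (hU' : ∀ y > 0, HasDerivAt U (U' y) y) (hIpos : ∀ p > 0, 0 < I p)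
    (hI : ∀ p > 0, U' (I p) = p) :
    ConvexOn ℝ (Ioi 0) (convexDual U I) := by
  refine ⟨convex_Ioi 0, fun p hp q hq a b ha hb hab => ?_⟩
  have hr : a • p + b • q ∈ Ioi 0 := convex_Ioi 0 hp hq ha hb hab
  have hp' := sub_mul_le_convexDual hU hU' hIpos hI hp (hIpos _ hr)
  have hq' := sub_mul_le_convexDual hU hU' hIpos hI hq (hIpos _ hr)
  simp only [smul_eq_mul] at hp' hq' ⊢
  calc U (I (a * p + b * q)) - (a * p + b * q) * I (a * p + b * q)
      = a * (U (I (a * p + b * q)) - p * I (a * p + b * q))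
        + b * (U (I (a * p + b * q)) - q * I (a * p + b * q)) := by
        linear_combination (-U (I (a * p + b * q))) * hab
    _ ≤ a * (U (I p) - p * I p) + b * (U (I q) - q * I q) :=
        add_le_add (mul_le_mul_of_nonneg_left hp' ha) (mul_le_mul_of_nonneg_left hq' hb)

theorem antitoneOn_convexDual (hU : ConcaveOn ℝ (Ioi 0) U)
    (hU' : ∀ y > 0, HasDerivAt U (U' y) y) (hIpos : ∀ p > 0, 0 < I p)
    (hI : ∀ p > 0, U' (I p) = p) :
    AntitoneOn (convexDual U I) (Ioi 0) := by
  intro p hp q hq hpq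
  calc U (I q) - q * I q ≤ U (I q) - p * I q := by
        gcongr
        exact (hIpos q hq).le
    _ ≤ U (I p) - p * I p := sub_mul_le_convexDual hU hU' hIpos hI hp (hIpos q hq)

end ConvexDual

theorem ConcaveOn.exists_forall_le_and_le_add_mul {v v' : ℝ → ℝ} {L : ℝ}
    (hconc : ConcaveOn ℝ (Ioi 0) v) (hv : ∀ x > 0, HasDerivAt v (v' x) x)
    (hv'0 : ∀ x > 0, 0 ≤ v' x) (hv'L : ∀ x > 0, v' x ≤ L) :
    ∃ v₀, ∀ x > 0, v₀ ≤ v x ∧ v x ≤ v₀ + L * x := by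
  have hlower : ∀ x > 0, ∀ y > 0, v x - L * x ≤ v y := by
    intro x hx y hy
    have := hconc.sub_le_mul_sub_of_hasDerivAt hy hx (hv y hy)
    nlinarith [mul_le_mul_of_nonneg_right (hv'L y hy) hx.le, mul_nonneg (hv'0 y hy) hy.le]
  have hbdd : BddBelow (v '' Ioi 0) := by
    refine ⟨v 1 - L * 1, ?_⟩
    rintro _ ⟨y, hy, rfl⟩
    exact hlower 1 one_pos y hy
  refine ⟨sInf (v '' Ioi 0), fun x hx => ⟨csInf_le hbdd (mem_image_of_mem v hx), ?_⟩⟩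
  have : v x - L * x ≤ sInf (v '' Ioi 0) := by
    refine le_csInf ⟨v 1, mem_image_of_mem v (mem_Ioi.2 one_pos)⟩ ?_
    rintro _ ⟨y, hy, rfl⟩
    exact hlower x hx y hy
  linarith

theorem eventually_mul_le_mul_rpow {a b α : ℝ} (hb : 0 < b) (hα : α < 1) :
    ∀ᶠ x in 𝓝[>] 0, a * x ≤ b * x ^ α := by
  filter_upwards [(tendsto_rpow_neg_nhdsGT_zero (sub_neg.2 hα)).eventually_ge_atTop (a / b),
    self_mem_nhdsWithin] with x hx hx0
  have hx0 : 0 < x := hx0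
  rw [Real.rpow_sub_one hx0.ne', div_le_iff₀ hb, div_mul_eq_mul_div, le_div_iff₀ hx0] at hx
  linarith

section HJB

variable {α μ σ β L m v₀ : ℝ} {v v' v'' H : ℝ → ℝ}

theorem hjb_mul_le_hamiltonian (hα : 0 < α) (hβ : 0 ≤ β) (hv'' : ∀ x > 0, v'' x ≤ 0)
    (hHJB : ∀ x > 0, β * v x =
      (1 / 2) * σ ^ 2 * x ^ 2 * v'' x + (x ^ α - μ * x) * v' x + H (v' x))
    (hv₀ : ∀ x > 0, v₀ ≤ v x) (hv'lim : Tendsto v' (𝓝[>] 0) (𝓝 L)) (hH : ContinuousAt H L) :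
    β * v₀ ≤ H L := by
  have hdrift : Tendsto (fun x : ℝ => x ^ α - μ * x) (𝓝[>] 0) (𝓝 0) := by
    have : ContinuousAt (fun x : ℝ => x ^ α - μ * x) 0 :=
      (Real.continuousAt_rpow_const 0 α (Or.inr hα.le)).sub (by fun_prop)
    simpa [Real.zero_rpow hα.ne'] using this.tendsto.mono_left nhdsWithin_le_nhds
  have hrhs : Tendsto (fun x => (x ^ α - μ * x) * v' x + H (v' x)) (𝓝[>] 0) (𝓝 (H L)) := by
    simpa using (hdrift.mul hv'lim).add (hH.tendsto.comp hv'lim)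
  refine ge_of_tendsto hrhs ?_
  filter_upwards [self_mem_nhdsWithin] with x hx
  have hdiff : (1 / 2) * σ ^ 2 * x ^ 2 * v'' x ≤ 0 :=
    mul_nonpos_of_nonneg_of_nonpos (by positivity) (hv'' x hx)
  nlinarith [mul_le_mul_of_nonneg_left (hv₀ x hx) hβ, hHJB x hx]

theorem hjb_eventually_deriv2_le_neg_rpow (hα : α < 1) (hμ : 0 ≤ μ) (hσ : σ ≠ 0) (hβ : 0 ≤ β)
    (hm : 0 < m)
    (hHJB : ∀ x > 0, β * v x =
      (1 / 2) * σ ^ 2 * x ^ 2 * v'' x + (x ^ α - μ * x) * v' x + H (v' x))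
    (hv₀H : β * v₀ ≤ H L) (hv : ∀ x > 0, v x ≤ v₀ + L * x) (hv'L : ∀ x > 0, v' x ≤ L)
    (hHL : ∀ x > 0, H L ≤ H (v' x)) (hmv' : ∀ᶠ x in 𝓝[>] 0, m ≤ v' x) :
    ∀ᶠ x in 𝓝[>] 0, v'' x ≤ -(m / σ ^ 2) * x ^ (α - 2) := by
  filter_upwards [hmv', eventually_mul_le_mul_rpow (a := (β + μ) * L) (half_pos hm) hα,
    self_mem_nhdsWithin] with x hmx hsmall hx
  have hx : 0 < x := hx
  have hxα : 0 < x ^ α := Real.rpow_pos_of_pos hx α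
  have hdiff : (1 / 2) * σ ^ 2 * x ^ 2 * v'' x ≤ -(m / 2) * x ^ α := by
    nlinarith [hHJB x hx, hHL x hx, mul_le_mul_of_nonneg_left (hv x hx) hβ,
      mul_le_mul_of_nonneg_left hmx hxα.le,
      mul_le_mul_of_nonneg_left (hv'L x hx) (mul_nonneg hμ hx.le)]
  have hpow : x ^ (α - 2) * x ^ 2 = x ^ α := by
    rw [← Real.rpow_natCast, ← Real.rpow_add hx]
    norm_num
  have hσx : 0 < (1 / 2) * σ ^ 2 * x ^ 2 := by positivity
  refine le_of_mul_le_mul_right ?_ hσx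
  calc v'' x * ((1 / 2) * σ ^ 2 * x ^ 2) ≤ -(m / 2) * x ^ α := by linarith
    _ = -(m / σ ^ 2) * x ^ (α - 2) * ((1 / 2) * σ ^ 2 * x ^ 2) := by
      rw [← hpow]
      field_simp

end HJB

theorem hjb_solution_deriv_explodes_at_zero_general
    (α μ σ β : ℝ) (hα0 : 0 < α) (hα1 : α < 1) (hμ : 0 < μ) (hσ : 0 < σ) (hβ : 0 < β)
    (U U' U'' : ℝ → ℝ)
    (hU'deriv : ∀ y > (0 : ℝ), HasDerivAt U (U' y) y)
    (hU''deriv : ∀ y > (0 : ℝ), HasDerivAt U' (U'' y) y)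
    (hU''neg : ∀ y > (0 : ℝ), U'' y < 0)
    (I : ℝ → ℝ)
    (hIpos : ∀ p > (0 : ℝ), 0 < I p)
    (hIright : ∀ p > (0 : ℝ), U' (I p) = p)
    (v v' v'' : ℝ → ℝ)
    (hv'deriv : ∀ x > (0 : ℝ), HasDerivAt v (v' x) x)
    (hv''deriv : ∀ x > (0 : ℝ), HasDerivAt v' (v'' x) x)
    (hconc : ConcaveOn ℝ (Ioi 0) v)
    (hv'pos : ∀ x > (0 : ℝ), 0 < v' x)
    (hHJB : ∀ x > (0 : ℝ), β * v x =
      (1 / 2) * σ ^ 2 * x ^ 2 * v'' x + (x ^ α - μ * x) * v' x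
        + U (I (v' x)) - v' x * I (v' x)) :
    Tendsto v' (𝓝[>] 0) atTop := by
  have hU : ConcaveOn ℝ (Ioi 0) U := concaveOn_of_hasDerivAt2_nonpos (convex_Ioi 0) isOpen_Ioi
    hU'deriv hU''deriv fun y hy => (hU''neg y hy).le
  have hHJB' : ∀ x > 0, β * v x =
      (1 / 2) * σ ^ 2 * x ^ 2 * v'' x + (x ^ α - μ * x) * v' x + convexDual U I (v' x) := by
    intro x hx
    rw [hHJB x hx, convexDual]
    ring
  have hv'anti : AntitoneOn v' (Ioi 0) := hconc.antitoneOn_of_hasDerivAt hv'deriv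
  have hv'' : ∀ x > 0, v'' x ≤ 0 := fun x hx =>
    (hv''deriv x hx).hasDerivWithinAt.nonpos_of_antitoneOn (isOpen_Ioi.preperfect x hx) hv'anti
  by_contra hnot
  obtain ⟨L, hv'L, hlim⟩ := hv'anti.exists_tendsto_nhdsGT_of_not_tendsto_atTop hnot
  have hL : 0 < L := (hv'pos 1 one_pos).trans_le (hv'L 1 one_pos)
  obtain ⟨v₀, hv₀⟩ :=
    hconc.exists_forall_le_and_le_add_mul hv'deriv (fun x hx => (hv'pos x hx).le) hv'L
  have hH : ContinuousAt (convexDual U I) L :=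
    ((convexOn_convexDual hU hU'deriv hIpos hIright).continuousOn isOpen_Ioi).continuousAt
      (isOpen_Ioi.mem_nhds hL)
  have hv₀H : β * v₀ ≤ convexDual U I L :=
    hjb_mul_le_hamiltonian hα0 hβ.le hv'' hHJB' (fun x hx => (hv₀ x hx).1) hlim hH
  have hHL : ∀ x > 0, convexDual U I L ≤ convexDual U I (v' x) := fun x hx =>
    antitoneOn_convexDual hU hU'deriv hIpos hIright (hv'pos x hx) hL (hv'L x hx)
  have hv'half : ∀ᶠ x in 𝓝[>] 0, L / 2 ≤ v' x :=
    (hlim.eventually (eventually_gt_nhds (half_lt_self hL))).mono fun _ h => h.le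
  exact hnot <| tendsto_nhdsGT_zero_atTop_of_deriv_le_neg_rpow (by positivity)
    (by linarith : α - 2 < -1) hv''deriv <| hjb_eventually_deriv2_le_neg_rpow hα1 hμ.le
      hσ.ne' hβ.le (half_pos hL) hHJB' hv₀H (fun x hx => (hv₀ x hx).2) hv'L hHL hv'half

/-- The derivative of a concave classical solution of the HJB equation of the
stochastic Ramsey problem explodes at the origin: `v'(x) → ∞` as `x ↓ 0`. -/
theorem hjb_solution_deriv_explodes_at_zero
    (α μ σ β : ℝ) (hα0 : 0 < α) (hα1 : α < 1) (hμ : 0 < μ) (hσ : 0 < σ) (hβ : 0 < β)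
    (U U' U'' : ℝ → ℝ)
    (hUcont : ContinuousOn U (Ici 0)) (hU0 : U 0 = 0)
    (hU'deriv : ∀ y > (0 : ℝ), HasDerivAt U (U' y) y)
    (hU''deriv : ∀ y > (0 : ℝ), HasDerivAt U' (U'' y) y)
    (hU''cont : ContinuousOn U'' (Ioi 0))
    (hU'pos : ∀ y > (0 : ℝ), 0 < U' y)
    (hU''neg : ∀ y > (0 : ℝ), U'' y < 0)
    (hU'0 : Tendsto U' (𝓝[>] 0) atTop)
    (hU'top : Tendsto U' atTop (𝓝 0))
    (I : ℝ → ℝ)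
    (hIpos : ∀ p > (0 : ℝ), 0 < I p)
    (hIright : ∀ p > (0 : ℝ), U' (I p) = p)
    (hIleft : ∀ y > (0 : ℝ), I (U' y) = y)
    (v v' v'' : ℝ → ℝ)
    (hv'deriv : ∀ x > (0 : ℝ), HasDerivAt v (v' x) x)
    (hv''deriv : ∀ x > (0 : ℝ), HasDerivAt v' (v'' x) x)
    (hv''cont : ContinuousOn v'' (Ioi 0))
    (hconc : ConcaveOn ℝ (Ioi 0) v)
    (hv'pos : ∀ x > (0 : ℝ), 0 < v' x)
    (hHJB : ∀ x > (0 : ℝ), β * v x =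
      (1 / 2) * σ ^ 2 * x ^ 2 * v'' x + (x ^ α - μ * x) * v' x
        + U (I (v' x)) - v' x * I (v' x)) :
    Tendsto v' (𝓝[>] 0) atTop :=
  hjb_solution_deriv_explodes_at_zero_general α μ σ β hα0 hα1 hμ hσ hβ U U' U'' hU'deriv hU''deriv
    hU''neg I hIpos hIright v v' v'' hv'deriv hv''deriv hconc hv'pos hHJB
end

section
/- There exists a constant C₂ > 0 such that v(x) ≤ C₂ (1 + x^{1−γ}) for all x > 0. -/
/-!
Concavity and `v ≥ 0` give `v'' ≤ 0` and `x v'(x) ≤ 2 v(x)`. Hence, once `x ^ (α - 1) ≤ β / 4`,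
the diffusion term of the HJB equation is nonpositive and the drift term is at most `β v / 2`, so
`β v ≤ 2 c (v') ^ (-(1 - γ) / γ)` with `c = γ / (1 - γ)`. Equivalently `v' v ^ (γ / (1 - γ))` is
bounded, i.e. `v ^ (1 / (1 - γ))` has bounded derivative and grows at most linearly. Taking the
`(1 - γ)`-th power, and using that `v` is increasing near `0`, gives the bound.
-/

open Set Filter Topology

theorem ConcaveOn.nonpos_of_hasDerivAt_of_hasDerivAt {S : Set ℝ} {f f' : ℝ → ℝ} {x f'' : ℝ}
    (hfc : ConcaveOn ℝ S f) (hS : IsOpen S) (hf : ∀ y ∈ S, HasDerivAt f (f' y) y) (hx : x ∈ S)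
    (hf' : HasDerivAt f' f'' x) : f'' ≤ 0 := by
  have hanti : AntitoneOn f' S := fun a ha b hb hab => by
    simpa only [(hf a ha).deriv, (hf b hb).deriv] using
      hfc.antitoneOn_deriv (fun y hy => (hf y hy).differentiableAt) ha hb hab
  have hacc : AccPt x (𝓟 S) := by
    simpa using (PerfectSpace.univ_preperfect x (mem_univ x)).nhds_inter (hS.mem_nhds hx)
  exact hf'.hasDerivWithinAt.nonpos_of_antitoneOn hacc hanti

theorem ConcaveOn.mul_le_two_mul_of_hasDerivAt {f : ℝ → ℝ} {x d : ℝ}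
    (hfc : ConcaveOn ℝ (Ioi 0) f) (hf0 : ∀ y > 0, 0 ≤ f y) (hx : 0 < x)
    (hf : HasDerivAt f d x) : x * d ≤ 2 * f x := by
  have hx2 : 0 < x / 2 := half_pos hx
  have hslope := hfc.le_slope_of_hasDerivAt hx2 hx (half_lt_self hx) hf
  rw [slope_def_field, le_div_iff₀ (by linarith)] at hslope
  linarith [hf0 (x / 2) hx2]

theorem hjb_half_mul_le_consumption_term {α β μ σ y u u' u'' R : ℝ} (hy : 0 < y) (hμ : 0 ≤ μ)
    (hu' : 0 ≤ u') (hu'' : u'' ≤ 0) (htangent : y * u' ≤ 2 * u) (hsmall : y ^ (α - 1) ≤ β / 4)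
    (h : β * u = 1 / 2 * σ ^ 2 * y ^ 2 * u'' + (y ^ α - μ * y) * u' + R) :
    β / 2 * u ≤ R := by
  have hdiffusion : 1 / 2 * σ ^ 2 * y ^ 2 * u'' ≤ 0 :=
    mul_nonpos_of_nonneg_of_nonpos (by positivity) hu''
  have hdrift : (y ^ α - μ * y) * u' ≤ β / 2 * u := by
    have hyα : y ^ α = y ^ (α - 1) * y := by
      rw [← Real.rpow_add_one hy.ne', sub_add_cancel]
    calc (y ^ α - μ * y) * u' ≤ y ^ (α - 1) * (y * u') := by
          rw [hyα]; nlinarith [mul_nonneg (mul_nonneg hμ hy.le) hu']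
      _ ≤ y ^ (α - 1) * (2 * u) := mul_le_mul_of_nonneg_left htangent (by positivity)
      _ ≤ β / 4 * (2 * u) := mul_le_mul_of_nonneg_right hsmall (by nlinarith)
      _ = β / 2 * u := by ring
  linarith

theorem mul_rpow_inv_le_of_le_mul_rpow_neg {θ M a b : ℝ} (hθ : 0 < θ) (ha : 0 < a)
    (hb : 0 ≤ b) (h : b ≤ M * a ^ (-θ)) : a * b ^ θ⁻¹ ≤ M ^ θ⁻¹ := by
  have haθ : 0 < a ^ θ := Real.rpow_pos_of_pos ha θ
  have hprod : a ^ θ * b ≤ M := by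
    rwa [Real.rpow_neg ha.le, ← div_eq_mul_inv, le_div_iff₀ haθ, mul_comm] at h
  calc a * b ^ θ⁻¹ = (a ^ θ * b) ^ θ⁻¹ := by
        rw [Real.mul_rpow haθ.le hb, ← Real.rpow_mul ha.le, mul_inv_cancel₀ hθ.ne', Real.rpow_one]
    _ ≤ M ^ θ⁻¹ := by gcongr

theorem rpow_le_rpow_add_mul_of_deriv_mul_rpow_le {f f' : ℝ → ℝ} {q K a x : ℝ} (hq : 1 ≤ q)
    (hf : ∀ y ≥ a, HasDerivAt f (f' y) y) (hK : ∀ y ≥ a, f' y * f y ^ (q - 1) ≤ K)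
    (hx : a ≤ x) : f x ^ q ≤ f a ^ q + q * K * (x - a) := by
  have hfq : ∀ y ≥ a, HasDerivAt (fun z => f z ^ q) (f' y * q * f y ^ (q - 1)) y :=
    fun y hy => (hf y hy).rpow_const (Or.inr hq)
  have hmvt := (convex_Ici a).image_sub_le_mul_sub_of_deriv_le (f := fun z => f z ^ q)
    (fun y hy => (hfq y hy).continuousAt.continuousWithinAt)
    (fun y hy => (hfq y (le_of_lt (by simpa using hy))).differentiableAt.differentiableWithinAt)
    (C := q * K) (fun y hy => by
      have hy : a ≤ y := le_of_lt (by simpa using hy)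
      rw [(hfq y hy).deriv, mul_comm (f' y), mul_assoc]
      exact mul_le_mul_of_nonneg_left (hK y hy) (by linarith))
    a self_mem_Ici x hx hx
  linarith

theorem rpow_le_of_rpow_inv_le_add_mul {p A B x y : ℝ} (hp0 : 0 < p) (hp1 : p ≤ 1) (hA : 0 ≤ A)
    (hB : 0 ≤ B) (hx : 0 ≤ x) (hy : 0 ≤ y) (h : y ^ p⁻¹ ≤ A + B * x) :
    y ≤ A ^ p + B ^ p * x ^ p := by
  calc y = (y ^ p⁻¹) ^ p := by rw [← Real.rpow_mul hy, inv_mul_cancel₀ hp0.ne', Real.rpow_one]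
    _ ≤ (A + B * x) ^ p := by gcongr
    _ ≤ A ^ p + (B * x) ^ p := Real.rpow_add_le_add_rpow hA (by positivity) hp0.le hp1
    _ = A ^ p + B ^ p * x ^ p := by rw [Real.mul_rpow hB hx]

theorem exists_le_mul_one_add_rpow_of_rpow_inv_le {f : ℝ → ℝ} {p a A B : ℝ} (hp0 : 0 < p)
    (hp1 : p ≤ 1) (ha : 0 < a) (hA : 0 ≤ A) (hB : 0 < B) (hf0 : ∀ x > 0, 0 ≤ f x)
    (hmono : MonotoneOn f (Ioi 0)) (h : ∀ x ≥ a, f x ^ p⁻¹ ≤ A + B * x) :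
    ∃ C > 0, ∀ x > 0, f x ≤ C * (1 + x ^ p) := by
  set A' := A + B * a
  have hA' : 0 ≤ A' := by positivity
  have hlin : ∀ x > 0, f x ^ p⁻¹ ≤ A' + B * x := by
    intro x hx
    rcases le_total a x with hax | hxa
    · nlinarith [h x hax]
    · calc f x ^ p⁻¹ ≤ f a ^ p⁻¹ := by
            gcongr
            · exact hf0 x hx
            · exact hmono hx ha hxa
        _ ≤ A' + B * x := by nlinarith [h a le_rfl]
  refine ⟨A' ^ p + B ^ p, by positivity, fun x hx => ?_⟩
  have hxp : 0 ≤ x ^ p := by positivity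
  calc f x ≤ A' ^ p + B ^ p * x ^ p :=
        rpow_le_of_rpow_inv_le_add_mul hp0 hp1 hA' hB.le hx.le (hf0 x hx) (hlin x hx)
    _ ≤ (A' ^ p + B ^ p) * (1 + x ^ p) := by
        nlinarith [Real.rpow_nonneg hA' p, Real.rpow_nonneg hB.le p]

theorem isoelastic_hjb_eventually_deriv_mul_rpow_le {α γ μ σ β : ℝ} (hα1 : α < 1)
    (hγ0 : 0 < γ) (hγ1 : γ < 1) (hμ : 0 ≤ μ) (hβ : 0 < β) {v v' v'' : ℝ → ℝ}
    (hv'deriv : ∀ x > (0 : ℝ), HasDerivAt v (v' x) x)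
    (hv''deriv : ∀ x > (0 : ℝ), HasDerivAt v' (v'' x) x)
    (hvnonneg : ∀ x > (0 : ℝ), 0 ≤ v x) (hconc : ConcaveOn ℝ (Ioi 0) v)
    (hv'pos : ∀ x > (0 : ℝ), 0 < v' x)
    (hHJB : ∀ x > (0 : ℝ), β * v x =
      (1 / 2) * σ ^ 2 * x ^ 2 * v'' x + (x ^ α - μ * x) * v' x
        + (γ / (1 - γ)) * (v' x) ^ ((γ - 1) / γ)) :
    ∀ᶠ y in atTop,
      v' y * v y ^ ((1 - γ)⁻¹ - 1) ≤ (2 * (γ / (1 - γ)) / β) ^ ((1 - γ)⁻¹ - 1) := by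
  have hθ : 0 < (1 - γ) / γ := div_pos (by linarith) hγ0
  have hθinv : ((1 - γ) / γ)⁻¹ = (1 - γ)⁻¹ - 1 := by
    field_simp [show 1 - γ ≠ 0 by linarith]; ring
  have hdecay : ∀ᶠ y : ℝ in atTop, y ^ (-(1 - α)) ≤ β / 4 :=
    (tendsto_rpow_neg_atTop (by linarith)).eventually (eventually_le_nhds (by positivity))
  filter_upwards [eventually_gt_atTop 0, hdecay] with y hy hsmall
  rw [neg_sub] at hsmall
  rw [← hθinv]
  refine mul_rpow_inv_le_of_le_mul_rpow_neg hθ (hv'pos y hy) (hvnonneg y hy) ?_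
  have hhalf := hjb_half_mul_le_consumption_term hy hμ (hv'pos y hy).le
    (hconc.nonpos_of_hasDerivAt_of_hasDerivAt isOpen_Ioi hv'deriv hy (hv''deriv y hy))
    (hconc.mul_le_two_mul_of_hasDerivAt hvnonneg hy (hv'deriv y hy)) hsmall (hHJB y hy)
  rw [← neg_div, neg_sub, div_mul_eq_mul_div, le_div_iff₀ hβ]
  linarith

theorem isoelastic_hjb_upper_growth_bound_general
    (α γ μ σ β : ℝ) (hα1 : α < 1) (hγ0 : 0 < γ) (hγ1 : γ < 1)
    (hμ : 0 < μ) (hβ : 0 < β)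
    (v v' v'' : ℝ → ℝ)
    (hv'deriv : ∀ x > (0 : ℝ), HasDerivAt v (v' x) x)
    (hv''deriv : ∀ x > (0 : ℝ), HasDerivAt v' (v'' x) x)
    (hvnonneg : ∀ x > (0 : ℝ), 0 ≤ v x)
    (hconc : ConcaveOn ℝ (Ioi 0) v)
    (hv'pos : ∀ x > (0 : ℝ), 0 < v' x)
    (hHJB : ∀ x > (0 : ℝ), β * v x =
      (1 / 2) * σ ^ 2 * x ^ 2 * v'' x + (x ^ α - μ * x) * v' x
        + (γ / (1 - γ)) * (v' x) ^ ((γ - 1) / γ)) :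
    ∃ C₂ > (0 : ℝ), ∀ x > (0 : ℝ), v x ≤ C₂ * (1 + x ^ (1 - γ)) := by
  have hp : 0 < 1 - γ := by linarith
  obtain ⟨x₀, hx₀⟩ := eventually_atTop.1 <| (eventually_gt_atTop 0).and <|
    isoelastic_hjb_eventually_deriv_mul_rpow_le hα1 hγ0 hγ1 hμ.le hβ hv'deriv hv''deriv hvnonneg
      hconc hv'pos hHJB
  obtain ⟨hx₀pos, -⟩ := hx₀ x₀ le_rfl
  have hmono : MonotoneOn v (Ioi 0) :=
    monotoneOn_of_hasDerivWithinAt_nonneg (convex_Ioi 0)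
      (fun x hx => (hv'deriv x hx).continuousAt.continuousWithinAt)
      (fun x hx => (hv'deriv x (by simpa using hx)).hasDerivWithinAt)
      (fun x hx => (hv'pos x (by simpa using hx)).le)
  have hK : 0 < (2 * (γ / (1 - γ)) / β) ^ ((1 - γ)⁻¹ - 1) :=
    Real.rpow_pos_of_pos (div_pos (mul_pos two_pos (div_pos hγ0 hp)) hβ) _
  refine exists_le_mul_one_add_rpow_of_rpow_inv_le hp (by linarith) hx₀pos
    (Real.rpow_nonneg (hvnonneg x₀ hx₀pos) (1 - γ)⁻¹) (mul_pos (inv_pos.2 hp) hK) hvnonneg hmono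
    fun x hx => ?_
  have hgrowth := rpow_le_rpow_add_mul_of_deriv_mul_rpow_le ((one_le_inv₀ hp).2 (by linarith))
    (fun y hy => hv'deriv y (hx₀pos.trans_le hy)) (fun y hy => (hx₀ y hy).2) hx
  linarith [mul_pos (mul_pos (inv_pos.2 hp) hK) hx₀pos]

/-- Upper growth bound: a nonnegative concave classical solution of the isoelastic HJB
equation satisfies `v(x) ≤ C₂ (1 + x^(1−γ))` for some constant `C₂ > 0`. -/
theorem isoelastic_hjb_upper_growth_bound
    (α γ μ σ β : ℝ) (hα0 : 0 < α) (hα1 : α < 1) (hγ0 : 0 < γ) (hγ1 : γ < 1)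
    (hμ : 0 < μ) (hσ : 0 < σ) (hβ : 0 < β)
    (v v' v'' : ℝ → ℝ)
    (hv'deriv : ∀ x > (0 : ℝ), HasDerivAt v (v' x) x)
    (hv''deriv : ∀ x > (0 : ℝ), HasDerivAt v' (v'' x) x)
    (hv''cont : ContinuousOn v'' (Ioi 0))
    (hvnonneg : ∀ x > (0 : ℝ), 0 ≤ v x)
    (hconc : ConcaveOn ℝ (Ioi 0) v)
    (hv'pos : ∀ x > (0 : ℝ), 0 < v' x)
    (hHJB : ∀ x > (0 : ℝ), β * v x =
      (1 / 2) * σ ^ 2 * x ^ 2 * v'' x + (x ^ α - μ * x) * v' x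
        + (γ / (1 - γ)) * (v' x) ^ ((γ - 1) / γ)) :
    ∃ C₂ > (0 : ℝ), ∀ x > (0 : ℝ), v x ≤ C₂ * (1 + x ^ (1 - γ)) :=
  isoelastic_hjb_upper_growth_bound_general α γ μ σ β hα1 hγ0 hγ1 hμ hβ v v' v'' hv'deriv hv''deriv
    hvnonneg hconc hv'pos hHJB
end
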